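/- arXiv:1801.03284 — 8 statements merged into one kernel-verified Lean document; each statement's English description precedes it below -/
import Mathlib

section
/- Let T > 0, let b : [0,∞) → [0,∞) be measurable and bounded on [0,T], and let K be a weakly continuous Markov kernel from [0,∞) to [0,∞). Then there exists a continuous function S_T : [0,T] → [0,1] with S_T(0) = 1 which satisfies the scale equation on [0,T] for parameters (b,K), i.e. for all t ∈ [0,T]: S_T(t) = exp(−∫₀ᵗ b(u)du) + exp(−∫₀ᵗ b(u)du) · ∫₀ᵗ b(s) exp(∫₀ˢ b(u)du) (∫_{[0,T−s)} S_T(s+v) K(s,dv)) ds. -/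
/-!
Write `B t = ∫₀ᵗ b`. The right-hand side of the scale equation defines a map `Φ` on continuous
functions with values in `[0,1]`. Replacing `b` by its restriction to `(0,T]` does not change the
equation on `[0,T]` and makes `b` integrable. Since `B` is absolutely continuous, the chain rule
gives `∫₀ᵗ b e^B = e^{B t} - 1`, so `Φ S t ∈ [e^{-B t}, 1]` and
`|Φ S₁ t - Φ S₂ t| ≤ (1 - e^{-B t}) ‖S₁ - S₂‖ ≤ (1 - e^{-∫ b}) ‖S₁ - S₂‖`. Hence `Φ` is a
contraction for the uniform distance and its fixed point is the scale function.
-/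

open MeasureTheory ProbabilityTheory Filter Topology Set
open scoped NNReal BoundedContinuousFunction

theorem LipschitzOnWith.comp_absolutelyContinuousOnInterval {X Y : Type*} [PseudoMetricSpace X]
    [PseudoMetricSpace Y] {g : X → Y} {f : ℝ → X} {K : ℝ≥0} {s : Set X} {a b : ℝ}
    (hg : LipschitzOnWith K g s) (hf : AbsolutelyContinuousOnInterval f a b)
    (hfs : MapsTo f (uIcc a b) s) : AbsolutelyContinuousOnInterval (g ∘ f) a b := by
  have hK := (show Tendsto _ _ _ from hf).const_mul (K : ℝ)
  rw [mul_zero] at hK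
  refine squeeze_zero' (Eventually.of_forall fun E => Finset.sum_nonneg fun _ _ => dist_nonneg)
    ?_ hK
  filter_upwards [mem_inf_of_right (mem_principal_self _)] with E hE
  rw [Finset.mul_sum]
  exact Finset.sum_le_sum fun i hi => hg.dist_le_mul _ (hfs (hE.1 i hi).1) _ (hfs (hE.1 i hi).2)

theorem ContDiff.comp_absolutelyContinuousOnInterval {g f : ℝ → ℝ} {a b : ℝ}
    (hg : ContDiff ℝ 1 g) (hf : AbsolutelyContinuousOnInterval f a b) :
    AbsolutelyContinuousOnInterval (g ∘ f) a b := by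
  obtain ⟨C, hC⟩ := hf.exists_bound
  obtain ⟨K, hK⟩ := hg.contDiffOn.exists_lipschitzOnWith one_ne_zero (convex_Icc (-C) C)
    isCompact_Icc
  exact hK.comp_absolutelyContinuousOnInterval hf fun x hx => abs_le.1 (hC x hx)

theorem integral_deriv_comp_integral_mul {g f : ℝ → ℝ} {a b : ℝ} (hg : ContDiff ℝ 1 g)
    (hf : IntervalIntegrable f volume a b) :
    ∫ x in a..b, deriv g (∫ t in a..x, f t) * f x = g (∫ t in a..b, f t) - g 0 := by
  have hF := hf.absolutelyContinuousOnInterval_intervalIntegral (c := a) left_mem_uIcc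
  have hgF := (hg.comp_absolutelyContinuousOnInterval hF).integral_deriv_eq_sub
  simp only [Function.comp_apply, intervalIntegral.integral_same] at hgF
  rw [← hgF]
  refine intervalIntegral.integral_congr_ae ?_
  filter_upwards [hf.ae_hasDerivAt_integral] with x hx hxab
  have hFx := hx (uIoc_subset_uIcc hxab) a left_mem_uIcc
  exact ((hg.differentiable one_ne_zero _).hasDerivAt.comp x hFx).deriv.symm

theorem intervalIntegral_eq_zero_of_nonpos {f : ℝ → ℝ} {t : ℝ} (hf : ∀ x ≤ 0, f x = 0)
    (ht : t ≤ 0) : ∫ x in (0:ℝ)..t, f x = 0 := by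
  rw [intervalIntegral.integral_of_ge ht, neg_eq_zero]
  exact setIntegral_eq_zero_of_forall_eq_zero fun x hx => hf x hx.2

namespace ScaleFunction

noncomputable def cumRate (b : ℝ → ℝ) (t : ℝ) : ℝ := ∫ u in (0:ℝ)..t, b u

noncomputable def shiftIntegral (K : Kernel ℝ ℝ) (T : ℝ) (S : ℝ → ℝ) (s : ℝ) : ℝ :=
  ∫ v in Ico (0:ℝ) (T - s), S (s + v) ∂(K s)

noncomputable def scaleMap (b : ℝ → ℝ) (K : Kernel ℝ ℝ) (T : ℝ) (S : ℝ → ℝ) (t : ℝ) : ℝ :=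
  Real.exp (-cumRate b t) + Real.exp (-cumRate b t) *
    ∫ s in (0:ℝ)..t, b s * Real.exp (cumRate b s) * shiftIntegral K T S s

section shiftIntegral

variable {K : Kernel ℝ ℝ} {T : ℝ} {S S₁ S₂ : ℝ → ℝ}

theorem measurable_shiftIntegral [IsSFiniteKernel K] (hS : Measurable S) :
    Measurable (shiftIntegral K T S) := by
  let A : Set (ℝ × ℝ) := {p | 0 ≤ p.2 ∧ p.2 < T - p.1}
  have hA : MeasurableSet A := (measurableSet_le measurable_const measurable_snd).inter
    (measurableSet_lt measurable_snd (measurable_const.sub measurable_fst))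
  have hG : StronglyMeasurable (A.indicator fun p : ℝ × ℝ => S (p.1 + p.2)) :=
    ((hS.comp measurable_add).indicator hA).stronglyMeasurable
  have hAS : shiftIntegral K T S =
      fun s => ∫ v, A.indicator (fun p => S (p.1 + p.2)) (s, v) ∂K s := by
    ext s
    rw [shiftIntegral, ← integral_indicator measurableSet_Ico]
    rfl
  rw [hAS]
  exact hG.integral_kernel_prod_right'.measurable

theorem integrable_comp_const_add [IsFiniteKernel K] {C : ℝ} (hS : Measurable S)
    (hSC : ∀ x, |S x| ≤ C) (s : ℝ) : Integrable (fun v => S (s + v)) (K s) :=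
  .of_bound (hS.comp (measurable_const_add s)).aestronglyMeasurable C
    (.of_forall fun v => hSC (s + v))

theorem abs_shiftIntegral_le [IsMarkovKernel K] {C : ℝ} (hSC : ∀ x, |S x| ≤ C) (s : ℝ) :
    |shiftIntegral K T S s| ≤ C := by
  have hC : 0 ≤ C := (abs_nonneg _).trans (hSC 0)
  rw [shiftIntegral, ← Real.norm_eq_abs]
  calc _ ≤ C * (K s).real (Ico 0 (T - s)) :=
        norm_setIntegral_le_of_norm_le_const (measure_lt_top _ _) fun v _ => hSC (s + v)
    _ ≤ C := mul_le_of_le_one_right hC measureReal_le_one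

theorem shiftIntegral_mem_Icc [IsMarkovKernel K] (hS : ∀ x, S x ∈ Icc (0:ℝ) 1) (s : ℝ) :
    shiftIntegral K T S s ∈ Icc (0:ℝ) 1 :=
  ⟨setIntegral_nonneg measurableSet_Ico fun v _ => (hS _).1,
    (le_abs_self _).trans <|
      abs_shiftIntegral_le (fun x => abs_le.2 ⟨by linarith [(hS x).1], (hS x).2⟩) s⟩

theorem shiftIntegral_sub [IsFiniteKernel K] {C₁ C₂ : ℝ} (hS₁ : Measurable S₁)
    (hS₁C : ∀ x, |S₁ x| ≤ C₁) (hS₂ : Measurable S₂) (hS₂C : ∀ x, |S₂ x| ≤ C₂) :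
    shiftIntegral K T S₁ - shiftIntegral K T S₂ = shiftIntegral K T (S₁ - S₂) := by
  ext s
  exact (integral_sub (integrable_comp_const_add hS₁ hS₁C s).integrableOn
    (integrable_comp_const_add hS₂ hS₂C s).integrableOn).symm

end shiftIntegral

section cumRate

variable {b b' g : ℝ → ℝ} {t : ℝ}

theorem cumRate_of_nonpos (hb_neg : ∀ x ≤ 0, b x = 0) (ht : t ≤ 0) : cumRate b t = 0 :=
  intervalIntegral_eq_zero_of_nonpos hb_neg ht

theorem cumRate_le_integral (hb : Integrable b) (hb0 : ∀ x, 0 ≤ b x)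
    (hb_neg : ∀ x ≤ 0, b x = 0) (t : ℝ) : cumRate b t ≤ ∫ x, b x := by
  rcases le_total t 0 with ht | ht
  · rw [cumRate_of_nonpos hb_neg ht]
    exact integral_nonneg hb0
  · rw [cumRate, intervalIntegral.integral_of_le ht]
    exact setIntegral_le_integral hb (.of_forall hb0)

theorem continuous_cumRate (hb : Integrable b) : Continuous (cumRate b) :=
  hb.continuous_primitive 0

theorem cumRate_congr (ht : 0 ≤ t) (h : EqOn b b' (Ioc 0 t)) : cumRate b t = cumRate b' t :=
  intervalIntegral.integral_congr_ae (.of_forall fun _ hx => h (by rwa [uIoc_of_le ht] at hx))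

theorem integral_mul_exp_cumRate (hb : IntervalIntegrable b volume 0 t) :
    ∫ s in (0:ℝ)..t, b s * Real.exp (cumRate b s) = Real.exp (cumRate b t) - 1 := by
  simpa [cumRate, mul_comm] using integral_deriv_comp_integral_mul Real.contDiff_exp hb

theorem integrable_mul_exp_cumRate_mul (hb : Integrable b) (hb0 : ∀ x, 0 ≤ b x)
    (hb_neg : ∀ x ≤ 0, b x = 0) {C : ℝ} (hg : AEStronglyMeasurable g) (hgC : ∀ x, |g x| ≤ C) :
    Integrable fun s => b s * Real.exp (cumRate b s) * g s := by
  have hexp : ∀ s, ‖Real.exp (cumRate b s)‖ ≤ Real.exp (∫ x, b x) := fun s => by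
    rw [Real.norm_eq_abs, Real.abs_exp]
    exact Real.exp_le_exp.2 (cumRate_le_integral hb hb0 hb_neg s)
  exact (hb.mul_bdd (Real.continuous_exp.comp (continuous_cumRate hb)).aestronglyMeasurable
    (.of_forall hexp)).mul_bdd hg (.of_forall hgC)

theorem abs_integral_mul_exp_cumRate_mul_le (hb : IntervalIntegrable b volume 0 t)
    (hb0 : ∀ x, 0 ≤ b x) (ht : 0 ≤ t) {C : ℝ} (hgC : ∀ x, |g x| ≤ C) :
    |∫ s in (0:ℝ)..t, b s * Real.exp (cumRate b s) * g s| ≤ (Real.exp (cumRate b t) - 1) * C := by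
  have hw : ContinuousOn (fun s => Real.exp (cumRate b s)) (uIcc 0 t) :=
    (hb.absolutelyContinuousOnInterval_intervalIntegral left_mem_uIcc).continuousOn.rexp
  rw [← integral_mul_exp_cumRate hb, ← intervalIntegral.integral_mul_const, ← Real.norm_eq_abs]
  refine intervalIntegral.norm_integral_le_of_norm_le ht (.of_forall fun s _ => ?_)
    ((hb.mul_continuousOn hw).mul_const C)
  have hws : 0 ≤ b s * Real.exp (cumRate b s) := mul_nonneg (hb0 s) (Real.exp_pos _).le
  rw [norm_mul, Real.norm_of_nonneg hws]
  exact mul_le_mul_of_nonneg_left (hgC s) hws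

end cumRate

section scaleMap

variable {b b' : ℝ → ℝ} {K : Kernel ℝ ℝ} {T t : ℝ} {S S₁ S₂ : ℝ → ℝ}

theorem scaleMap_of_nonpos (hb_neg : ∀ x ≤ 0, b x = 0) (ht : t ≤ 0) :
    scaleMap b K T S t = 1 := by
  have hJ : ∫ s in (0:ℝ)..t, b s * Real.exp (cumRate b s) * shiftIntegral K T S s = 0 :=
    intervalIntegral_eq_zero_of_nonpos (fun x hx => by rw [hb_neg x hx, zero_mul, zero_mul]) ht
  rw [scaleMap, cumRate_of_nonpos hb_neg ht, hJ, neg_zero, Real.exp_zero, mul_zero, add_zero]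

theorem scaleMap_congr (ht : 0 ≤ t) (h : EqOn b b' (Ioc 0 t)) :
    scaleMap b K T S t = scaleMap b' K T S t := by
  have hJ : ∫ s in (0:ℝ)..t, b s * Real.exp (cumRate b s) * shiftIntegral K T S s =
      ∫ s in (0:ℝ)..t, b' s * Real.exp (cumRate b' s) * shiftIntegral K T S s := by
    refine intervalIntegral.integral_congr_ae (.of_forall fun s hs => ?_)
    rw [uIoc_of_le ht] at hs
    rw [h hs, cumRate_congr hs.1.le (h.mono (Ioc_subset_Ioc_right hs.2))]
  rw [scaleMap, scaleMap, cumRate_congr ht h, hJ]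

theorem scaleMap_mem_Icc [IsMarkovKernel K] (hb : Integrable b) (hb0 : ∀ x, 0 ≤ b x)
    (hb_neg : ∀ x ≤ 0, b x = 0) (hS : ∀ x, S x ∈ Icc (0:ℝ) 1) (t : ℝ) :
    scaleMap b K T S t ∈ Icc (0:ℝ) 1 := by
  rcases le_total t 0 with ht | ht
  · rw [scaleMap_of_nonpos hb_neg ht]
    exact right_mem_Icc.2 zero_le_one
  set J := ∫ s in (0:ℝ)..t, b s * Real.exp (cumRate b s) * shiftIntegral K T S s
  have hJ0 : 0 ≤ J := intervalIntegral.integral_nonneg ht fun s _ =>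
    mul_nonneg (mul_nonneg (hb0 s) (Real.exp_pos _).le) (shiftIntegral_mem_Icc hS s).1
  have hJ1 : J ≤ Real.exp (cumRate b t) - 1 := by
    simpa using (le_abs_self J).trans <| abs_integral_mul_exp_cumRate_mul_le
      hb.intervalIntegrable hb0 ht fun s =>
        (abs_of_nonneg (shiftIntegral_mem_Icc hS s).1).trans_le (shiftIntegral_mem_Icc hS s).2
  have hprod : Real.exp (-cumRate b t) * Real.exp (cumRate b t) = 1 := by
    rw [← Real.exp_add, neg_add_cancel, Real.exp_zero]
  constructor <;> rw [scaleMap] <;> nlinarith [Real.exp_pos (-cumRate b t)]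

theorem continuous_scaleMap [IsMarkovKernel K] (hb : Integrable b) (hb0 : ∀ x, 0 ≤ b x)
    (hb_neg : ∀ x ≤ 0, b x = 0) {C : ℝ} (hS : Measurable S) (hSC : ∀ x, |S x| ≤ C) :
    Continuous (scaleMap b K T S) := by
  have hexp : Continuous fun t => Real.exp (-cumRate b t) := (continuous_cumRate hb).neg.rexp
  exact hexp.add <| hexp.mul <| (integrable_mul_exp_cumRate_mul hb hb0 hb_neg
    (measurable_shiftIntegral hS).aestronglyMeasurable
    (abs_shiftIntegral_le hSC)).continuous_primitive 0

theorem abs_scaleMap_sub_le [IsMarkovKernel K] (hb : Integrable b) (hb0 : ∀ x, 0 ≤ b x)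
    (hb_neg : ∀ x ≤ 0, b x = 0) {C₁ C₂ d : ℝ} (hS₁ : Measurable S₁) (hS₁C : ∀ x, |S₁ x| ≤ C₁)
    (hS₂ : Measurable S₂) (hS₂C : ∀ x, |S₂ x| ≤ C₂) (hd : ∀ x, |S₁ x - S₂ x| ≤ d) (t : ℝ) :
    |scaleMap b K T S₁ t - scaleMap b K T S₂ t| ≤ (1 - Real.exp (-∫ x, b x)) * d := by
  have hd0 : 0 ≤ d := (abs_nonneg _).trans (hd 0)
  have hβ : Real.exp (-∫ x, b x) ≤ 1 :=
    Real.exp_le_one_iff.2 (neg_nonpos.2 (integral_nonneg hb0))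
  rcases le_total t 0 with ht | ht
  · rw [scaleMap_of_nonpos hb_neg ht, scaleMap_of_nonpos hb_neg ht, sub_self, abs_zero]
    exact mul_nonneg (sub_nonneg.2 hβ) hd0
  have hint {S : ℝ → ℝ} {C : ℝ} (hS : Measurable S) (hSC : ∀ x, |S x| ≤ C) :=
    (integrable_mul_exp_cumRate_mul hb hb0 hb_neg
      (measurable_shiftIntegral (K := K) (T := T) hS).aestronglyMeasurable
      (abs_shiftIntegral_le hSC)).intervalIntegrable (a := 0) (b := t)
  have hdiff : scaleMap b K T S₁ t - scaleMap b K T S₂ t = Real.exp (-cumRate b t) *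
      ∫ s in (0:ℝ)..t, b s * Real.exp (cumRate b s) * shiftIntegral K T (S₁ - S₂) s := by
    rw [scaleMap, scaleMap, ← shiftIntegral_sub hS₁ hS₁C hS₂ hS₂C, add_sub_add_left_eq_sub,
      ← mul_sub, ← intervalIntegral.integral_sub (hint hS₁ hS₁C) (hint hS₂ hS₂C)]
    simp only [Pi.sub_apply, mul_sub]
  rw [hdiff, abs_mul, Real.abs_exp]
  calc _ ≤ Real.exp (-cumRate b t) * ((Real.exp (cumRate b t) - 1) * d) :=
        mul_le_mul_of_nonneg_left (abs_integral_mul_exp_cumRate_mul_le hb.intervalIntegrable hb0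
          ht (abs_shiftIntegral_le (S := S₁ - S₂) hd)) (Real.exp_pos _).le
    _ = (1 - Real.exp (-cumRate b t)) * d := by
        rw [Real.exp_neg]
        field_simp
    _ ≤ (1 - Real.exp (-∫ x, b x)) * d := by
        gcongr
        exact cumRate_le_integral hb hb0 hb_neg t

end scaleMap

theorem exists_fixedPoint_scaleMap {b : ℝ → ℝ} (hb : Integrable b) (hb0 : ∀ x, 0 ≤ b x)
    (hb_neg : ∀ x ≤ 0, b x = 0) (K : Kernel ℝ ℝ) [IsMarkovKernel K] (T : ℝ) :
    ∃ S : ℝ → ℝ, Continuous S ∧ (∀ t, S t ∈ Icc (0:ℝ) 1) ∧ ∀ t, scaleMap b K T S t = S t := by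
  let X := {S : ℝ →ᵇ ℝ | ∀ x, S x ∈ Icc (0:ℝ) 1}
  have hX : IsClosed X := by
    simp only [X, ofPred_forall]
    exact isClosed_iInter fun x => isClosed_Icc.preimage (continuous_eval_const x)
  have : CompleteSpace X := hX.completeSpace_coe
  have : Nonempty X := ⟨⟨.const ℝ 1, fun _ => right_mem_Icc.2 zero_le_one⟩⟩
  have habs (S : X) (x : ℝ) : |S.1 x| ≤ 1 := abs_le.2 ⟨by linarith [(S.2 x).1], (S.2 x).2⟩
  have hmem (S : X) := scaleMap_mem_Icc (K := K) (T := T) hb hb0 hb_neg S.2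
  let Φ : X → X := fun S =>
    ⟨.ofNormedAddCommGroup (scaleMap b K T S.1)
      (continuous_scaleMap hb hb0 hb_neg S.1.continuous.measurable (habs S)) 1
      fun t => abs_le.2 ⟨by linarith [(hmem S t).1], (hmem S t).2⟩, hmem S⟩
  have hq : 0 ≤ 1 - Real.exp (-∫ x, b x) :=
    sub_nonneg.2 (Real.exp_le_one_iff.2 (neg_nonpos.2 (integral_nonneg hb0)))
  have hΦ : ContractingWith (1 - Real.exp (-∫ x, b x)).toNNReal Φ := by
    refine ⟨Real.toNNReal_lt_one.2 (sub_lt_self _ (Real.exp_pos _)),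
      .of_dist_le_mul fun S₁ S₂ => ?_⟩
    rw [Subtype.dist_eq, Real.coe_toNNReal _ hq]
    refine (BoundedContinuousFunction.dist_le (mul_nonneg hq dist_nonneg)).2 fun t => ?_
    exact abs_scaleMap_sub_le hb hb0 hb_neg S₁.1.continuous.measurable (habs S₁)
      S₂.1.continuous.measurable (habs S₂) (fun x => S₁.1.dist_coe_le_dist x) t
  set S := ContractingWith.fixedPoint Φ hΦ
  exact ⟨S.1, S.1.continuous, S.2,
    fun t => congrArg (fun S : X => S.1 t) hΦ.fixedPoint_isFixedPt⟩

end ScaleFunction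

open ScaleFunction

theorem stmt_0_general
    (T : ℝ)
    (b : ℝ → ℝ) (hb_meas : Measurable b) (hb_nonneg : ∀ x, 0 ≤ b x)
    (hb_bdd : ∃ C : ℝ, ∀ x ∈ Set.Icc (0:ℝ) T, b x ≤ C)
    (K : Kernel ℝ ℝ) [IsMarkovKernel K] :
    ∃ S : ℝ → ℝ,
      ContinuousOn S (Set.Icc 0 T) ∧ S 0 = 1 ∧
      (∀ t ∈ Set.Icc (0:ℝ) T, S t ∈ Set.Icc (0:ℝ) 1) ∧
      (∀ t ∈ Set.Icc (0:ℝ) T,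
        S t = Real.exp (-(∫ u in (0:ℝ)..t, b u)) +
          Real.exp (-(∫ u in (0:ℝ)..t, b u)) *
            ∫ s in (0:ℝ)..t, b s * Real.exp (∫ u in (0:ℝ)..s, b u) *
              (∫ v in Set.Ico (0:ℝ) (T - s), S (s + v) ∂(K s))) := by
  obtain ⟨C, hC⟩ := hb_bdd
  set b' := (Ioc 0 T).indicator b
  have hb' : Integrable b' := (integrable_indicator_iff measurableSet_Ioc).2 <|
    Measure.integrableOn_of_bounded measure_Ioc_lt_top.ne hb_meas.aestronglyMeasurable
      (M := C) ((ae_restrict_iff' measurableSet_Ioc).2 <| .of_forall fun x hx => by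
        rw [Real.norm_of_nonneg (hb_nonneg x)]; exact hC x (Ioc_subset_Icc_self hx))
  have hb'_neg : ∀ x ≤ 0, b' x = 0 := fun x hx => indicator_of_notMem (fun h => hx.not_gt h.1) b
  obtain ⟨S, hS_cont, hS_mem, hS_fix⟩ := exists_fixedPoint_scaleMap hb'
    (indicator_nonneg fun x _ => hb_nonneg x) hb'_neg K T
  refine ⟨S, hS_cont.continuousOn, ?_, fun t _ => hS_mem t, fun t ht => ?_⟩
  · rw [← hS_fix 0, scaleMap_of_nonpos hb'_neg le_rfl]
  · rw [← hS_fix t, ← scaleMap_congr ht.1 fun x hx =>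
      (indicator_of_mem (Ioc_subset_Ioc_right ht.2 hx) b).symm]
    rfl

/-- **Theorem 4.1 (existence of the scale function).**
Let `T > 0`, let `b : [0,∞) → [0,∞)` be measurable and bounded on `[0,T]`, and let `K` be a
weakly continuous Markov kernel from `[0,∞)` to `[0,∞)`. Then there exists a continuous
function `S_T : [0,T] → [0,1]` with `S_T 0 = 1` satisfying the scale equation on `[0,T]`. -/
theorem stmt_0
    (T : ℝ) (hT : 0 < T)
    (b : ℝ → ℝ) (hb_meas : Measurable b) (hb_nonneg : ∀ x, 0 ≤ b x)
    (hb_bdd : ∃ C : ℝ, ∀ x ∈ Set.Icc (0:ℝ) T, b x ≤ C)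
    (K : Kernel ℝ ℝ) [IsMarkovKernel K]
    (hK_supp : ∀ x : ℝ, (K x) (Set.Iio 0) = 0)
    (hK_cont : ∀ f : ℝ → ℝ, Continuous f → (∃ C : ℝ, ∀ y, |f y| ≤ C) →
      Continuous fun x => ∫ y, f y ∂(K x)) :
    ∃ S : ℝ → ℝ,
      ContinuousOn S (Set.Icc 0 T) ∧ S 0 = 1 ∧
      (∀ t ∈ Set.Icc (0:ℝ) T, S t ∈ Set.Icc (0:ℝ) 1) ∧
      (∀ t ∈ Set.Icc (0:ℝ) T,
        S t = Real.exp (-(∫ u in (0:ℝ)..t, b u)) +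
          Real.exp (-(∫ u in (0:ℝ)..t, b u)) *
            ∫ s in (0:ℝ)..t, b s * Real.exp (∫ u in (0:ℝ)..s, b u) *
              (∫ v in Set.Ico (0:ℝ) (T - s), S (s + v) ∂(K s))) :=
  stmt_0_general T b hb_meas hb_nonneg hb_bdd K
end

section
/- Let T > 0, let b : [0,T] → [0,∞) be continuous, and let K be a weakly continuous Markov kernel from [0,∞) to [0,∞) such that t ↦ K(t, [0, T−t)) is continuous on [0,T]. If S : [0,T] → ℝ is continuous, bounded, and satisfies the scale equation on [0,T] for parameters (b,K), then S is continuously differentiable on [0,T] and for all t ∈ [0,T]: −S′(t) + b(t) (∫_{[0,T−t)} S(t+s) K(t,ds) − S(t)) = 0. -/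
/-!
Differentiating the scale equation (variation of constants) gives `S' = b (g - S)` with
`g t = ∫_{[0, T-t)} S (t + v) K(t, dv)`, once `g` is known to be continuous on `[0, T]`; that
continuity is the real content. After replacing `S` by a bounded, uniformly continuous extension
to `ℝ`, the shift `t ↦ S (t + ·)` is continuous in sup norm, so it suffices to treat a fixed bounded
continuous integrand. The sharp truncation to `[0, T - t)` is then replaced by a continuous cutoff
`φ ≤ 1_{[0, T - t₀)}` whose `K t₀`-integral is within `ε` of `K t₀ [0, T - t₀)`: weak continuity of
`K` controls `∫ φ S dK t`, and continuity of `t ↦ K t [0, T - t)` controls the cutoff error.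
-/

open MeasureTheory ProbabilityTheory Filter Topology

section

open Set
open scoped BoundedContinuousFunction

lemma exists_lt_measureReal_Ico_sub_lt (μ : Measure ℝ) [IsFiniteMeasure μ] (a r : ℝ) {ε : ℝ}
    (hε : 0 < ε) : ∃ c < r, μ.real (Ico a r) - μ.real (Ico a c) < ε := by
  obtain ⟨u, hu_mono, hu_lt, hu_lim⟩ := exists_seq_strictMono_tendsto r
  have hU : ⋃ n, Ico a (u n) = Ico a r := by
    ext x
    simp only [mem_iUnion, mem_Ico]
    constructor
    · rintro ⟨n, hax, hxu⟩
      exact ⟨hax, hxu.trans (hu_lt n)⟩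
    · rintro ⟨hax, hxr⟩
      obtain ⟨n, hn⟩ := (hu_lim.eventually (lt_mem_nhds hxr)).exists
      exact ⟨n, hax, hn⟩
  have hlim : Tendsto (fun n => μ.real (Ico a (u n))) atTop (𝓝 (μ.real (Ico a r))) := by
    rw [← hU]
    exact (ENNReal.tendsto_toReal (measure_ne_top _ _)).comp
      (tendsto_measure_iUnion_atTop fun m n hmn => Ico_subset_Ico_right (hu_mono.monotone hmn))
  obtain ⟨n, hn⟩ := (hlim.eventually (lt_mem_nhds (sub_lt_self _ hε))).exists
  exact ⟨u n, hu_lt n, by linarith⟩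

variable {X : Type*} [TopologicalSpace X] [MeasurableSpace X] [OpensMeasurableSpace X]

lemma abs_setIntegral_sub_integral_mul_le (μ : Measure X) [IsFiniteMeasure μ] {A : Set X}
    (hA : MeasurableSet A) {φ : X →ᵇ ℝ} (hφ : ∀ x, φ x ∈ Icc 0 1)
    (hφA : ∀ᵐ x ∂μ, x ∉ A → φ x = 0) (g : X →ᵇ ℝ) :
    |∫ x in A, g x ∂μ - ∫ x, φ x * g x ∂μ| ≤ ‖g‖ * (μ.real A - ∫ x, φ x ∂μ) := by
  have hA1 : Integrable (A.indicator 1) μ := (integrable_const (1 : ℝ)).indicator hA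
  have hind : Integrable (fun x => A.indicator 1 x - φ x) μ := hA1.sub (φ.integrable μ)
  have hφg : Integrable (fun x => φ x * g x) μ := (φ * g).integrable μ
  have hpt : ∀ᵐ x ∂μ, ‖A.indicator g x - φ x * g x‖ ≤ ‖g‖ * (A.indicator 1 x - φ x) := by
    filter_upwards [hφA] with x hx
    by_cases hxA : x ∈ A
    · have hgx : |g x| ≤ ‖g‖ := g.norm_coe_le_norm x
      rw [indicator_of_mem hxA, indicator_of_mem hxA, Pi.one_apply, Real.norm_eq_abs,
        ← one_sub_mul, abs_mul, abs_of_nonneg (sub_nonneg.mpr (hφ x).2), mul_comm]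
      exact mul_le_mul_of_nonneg_right hgx (sub_nonneg.mpr (hφ x).2)
    · simp [indicator_of_notMem hxA, hx hxA]
  rw [← integral_indicator hA, ← integral_sub ((g.integrable μ).indicator hA) hφg,
    ← Real.norm_eq_abs]
  calc _ ≤ ∫ x, ‖g‖ * (A.indicator 1 x - φ x) ∂μ :=
        norm_integral_le_of_norm_le (hind.const_mul _) hpt
    _ = _ := by
      rw [integral_const_mul, integral_sub hA1 (φ.integrable μ),
        integral_indicator_one hA]

theorem tendsto_setIntegral_Ico_of_tendsto_integral {ι : Type*} {l : Filter ι}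
    {μ : ι → Measure ℝ} [∀ i, IsFiniteMeasure (μ i)] {μ₀ : Measure ℝ} [IsFiniteMeasure μ₀]
    (hμ : ∀ f : ℝ →ᵇ ℝ, Tendsto (fun i => ∫ v, f v ∂μ i) l (𝓝 (∫ v, f v ∂μ₀)))
    (hsupp : ∀ i, μ i (Iio 0) = 0) (hsupp₀ : μ₀ (Iio 0) = 0)
    {r : ι → ℝ} {r₀ : ℝ} (hr : Tendsto r l (𝓝 r₀))
    (hmass : Tendsto (fun i => (μ i).real (Ico 0 (r i))) l (𝓝 (μ₀.real (Ico 0 r₀))))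
    (g : ℝ →ᵇ ℝ) :
    Tendsto (fun i => ∫ v in Ico 0 (r i), g v ∂μ i) l (𝓝 (∫ v in Ico 0 r₀, g v ∂μ₀)) := by
  rw [Metric.tendsto_nhds]
  intro ε hε
  set δ := ε / (2 * ‖g‖ + 2)
  have hδ : 0 < δ := by positivity
  have hδε : (2 * ‖g‖ + 1) * δ < ε := by
    rw [← lt_div_iff₀' (by positivity)]
    exact div_lt_div_of_pos_left hε (by positivity) (by linarith)
  -- `φ ≤ 1_{[0, r₀)}` up to a `μ₀`-null set, with `μ₀`-integral within `δ` of `μ₀ [0, r₀)`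
  obtain ⟨a, har₀, ha⟩ := exists_lt_measureReal_Ico_sub_lt μ₀ 0 r₀ hδ
  obtain ⟨c, hac, hcr₀⟩ := exists_between har₀
  obtain ⟨φ, hφ_zero, hφ_one, hφ⟩ := exists_bounded_zero_one_of_closed isClosed_Ici isClosed_Iic
    (disjoint_left.mpr fun v (hcv : c ≤ v) (hva : v ≤ a) => (hac.trans_le hcv).not_ge hva)
  have hφ_vanish : ∀ (ν : Measure ℝ), ν (Iio 0) = 0 → ∀ ρ, c ≤ ρ →
      ∀ᵐ v ∂ν, v ∉ Ico 0 ρ → φ v = 0 := by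
    intro ν hν ρ hρ
    filter_upwards [measure_eq_zero_iff_ae_notMem.mp hν] with v hv hvρ
    exact hφ_zero (show c ≤ v from hρ.trans (not_lt.mp fun h => hvρ ⟨not_lt.mp hv, h⟩))
  have hgap₀ : μ₀.real (Ico 0 r₀) - ∫ v, φ v ∂μ₀ < δ := by
    have : μ₀.real (Ico 0 a) ≤ ∫ v, φ v ∂μ₀ := by
      rw [← integral_indicator_one measurableSet_Ico]
      refine integral_mono ((integrable_const (1 : ℝ)).indicator measurableSet_Ico)
        (φ.integrable μ₀) fun v => ?_
      by_cases hv : v ∈ Ico 0 a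
      · rw [indicator_of_mem hv, Pi.one_apply, hφ_one hv.2.le, Pi.one_apply]
      · rw [indicator_of_notMem hv]
        exact (hφ v).1
    linarith
  have hgap := (hmass.sub (hμ φ)).eventually (gt_mem_nhds hgap₀)
  have hΦ : Tendsto (fun i => ∫ v, φ v * g v ∂μ i) l (𝓝 (∫ v, φ v * g v ∂μ₀)) := hμ (φ * g)
  filter_upwards [hgap, Metric.tendsto_nhds.mp hΦ δ hδ, hr.eventually (lt_mem_nhds hcr₀)]
    with i hgap_i hΦ_i hcr_i
  have h_i := abs_setIntegral_sub_integral_mul_le (μ i) measurableSet_Ico hφ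
    (hφ_vanish _ (hsupp i) _ hcr_i.le) g
  have h₀ := abs_setIntegral_sub_integral_mul_le μ₀ measurableSet_Ico hφ
    (hφ_vanish _ hsupp₀ _ hcr₀.le) g
  have hgδ : ∀ x, x < δ → ‖g‖ * x ≤ ‖g‖ * δ := fun x hx =>
    mul_le_mul_of_nonneg_left hx.le (norm_nonneg g)
  rw [Real.dist_eq] at hΦ_i ⊢
  have htri₁ := abs_sub_le (∫ v in Ico 0 (r i), g v ∂μ i) (∫ v, φ v * g v ∂μ i)
    (∫ v in Ico 0 r₀, g v ∂μ₀)
  have htri₂ := abs_sub_le (∫ v, φ v * g v ∂μ i) (∫ v, φ v * g v ∂μ₀) (∫ v in Ico 0 r₀, g v ∂μ₀)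
  rw [abs_sub_comm] at h₀
  linarith [hgδ _ hgap_i, hgδ _ hgap₀]

theorem tendsto_setIntegral_Ico_comp_add {l : Filter ℝ} {t₀ : ℝ} (hl : l ≤ 𝓝 t₀)
    {μ : ℝ → Measure ℝ} [∀ t, IsProbabilityMeasure (μ t)]
    (hμ : ∀ f : ℝ →ᵇ ℝ, Tendsto (fun t => ∫ v, f v ∂μ t) l (𝓝 (∫ v, f v ∂μ t₀)))
    (hsupp : ∀ t, μ t (Iio 0) = 0) {r : ℝ → ℝ} (hr : Tendsto r l (𝓝 (r t₀)))
    (hmass : Tendsto (fun t => (μ t).real (Ico 0 (r t))) l (𝓝 ((μ t₀).real (Ico 0 (r t₀)))))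
    {f : ℝ →ᵇ ℝ} (hf : UniformContinuous f) :
    Tendsto (fun t => ∫ v in Ico 0 (r t), f (t + v) ∂μ t) l
      (𝓝 (∫ v in Ico 0 (r t₀), f (t₀ + v) ∂μ t₀)) := by
  have hfixed : Tendsto (fun t => ∫ v in Ico 0 (r t), f (t₀ + v) ∂μ t) l
      (𝓝 (∫ v in Ico 0 (r t₀), f (t₀ + v) ∂μ t₀)) :=
    tendsto_setIntegral_Ico_of_tendsto_integral hμ hsupp (hsupp t₀) hr hmass
      (f.compContinuous (ContinuousMap.addLeft t₀))
  refine hfixed.congr_dist (Metric.tendsto_nhds.mpr fun ε hε => ?_)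
  obtain ⟨δ, hδ, hfδ⟩ := Metric.uniformContinuous_iff.mp hf (ε / 2) (half_pos hε)
  filter_upwards [hl (Metric.ball_mem_nhds t₀ hδ)] with t ht
  have hclose : ∀ v, ‖f (t₀ + v) - f (t + v)‖ ≤ ε / 2 := fun v =>
    (hfδ (by simpa [Real.dist_eq, abs_sub_comm] using ht)).le
  have hint : ∀ s, IntegrableOn (fun v => f (s + v)) (Ico 0 (r t)) (μ t) := fun s =>
    ((f.compContinuous (ContinuousMap.addLeft s)).integrable _).integrableOn
  rw [Real.dist_0_eq_abs, abs_of_nonneg dist_nonneg, dist_eq_norm,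
    ← integral_sub (hint t₀) (hint t)]
  calc _ ≤ ε / 2 * (μ t).real (Ico 0 (r t)) :=
        norm_setIntegral_le_of_norm_le_const (measure_lt_top _ _) fun v _ => hclose v
    _ ≤ ε / 2 := mul_le_of_le_one_right (half_pos hε).le measureReal_le_one
    _ < ε := half_lt_self hε

lemma ContinuousOn.exists_boundedContinuous_uniformContinuous_eqOn {S : ℝ → ℝ} {a b : ℝ}
    (hab : a ≤ b) (hS : ContinuousOn S (Icc a b)) :
    ∃ f : ℝ →ᵇ ℝ, UniformContinuous f ∧ EqOn f S (Icc a b) := by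
  let F : C(Icc a b, ℝ) := ⟨(Icc a b).domRestrict S, hS.domRestrict⟩
  refine ⟨(BoundedContinuousFunction.mkOfCompact F).compContinuous
    ⟨projIcc a b hab, continuous_projIcc⟩, ?_, fun x hx => ?_⟩
  · exact (CompactSpace.uniformContinuous_of_continuous F.continuous).comp
      (LipschitzWith.projIcc hab).uniformContinuous
  · show S (projIcc a b hab x) = S x
    rw [projIcc_of_mem hab hx]

lemma ContinuousOn.hasDerivWithinAt_intervalIntegral_Icc {f : ℝ → ℝ} {a b t : ℝ}
    (hf : ContinuousOn f (Icc a b)) (ht : t ∈ Icc a b) :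
    HasDerivWithinAt (fun u => ∫ x in a..u, f x) (f t) (Icc a b) t := by
  have : Fact (t ∈ Icc a b) := ⟨ht⟩
  exact intervalIntegral.integral_hasDerivWithinAt_right
    ((hf.mono (uIcc_subset_Icc (left_mem_Icc.2 (ht.1.trans ht.2)) ht)).intervalIntegrable)
    (hf.stronglyMeasurableAtFilter_nhdsWithin measurableSet_Icc t) (hf t ht)

open Real in
theorem hasDerivWithinAt_of_eq_exp_neg_integral {a T : ℝ} {b g S : ℝ → ℝ}
    (hb : ContinuousOn b (Icc a T)) (hg : ContinuousOn g (Icc a T))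
    (hS : ∀ t ∈ Icc a T, S t = exp (-∫ u in a..t, b u) +
      exp (-∫ u in a..t, b u) * ∫ s in a..t, b s * exp (∫ u in a..s, b u) * g s)
    {t : ℝ} (ht : t ∈ Icc a T) : HasDerivWithinAt S (b t * (g t - S t)) (Icc a T) t := by
  have hB : ∀ t ∈ Icc a T, HasDerivWithinAt (fun u => ∫ x in a..u, b x) (b t) (Icc a T) t :=
    fun t ht => hb.hasDerivWithinAt_intervalIntegral_Icc ht
  have hh : ContinuousOn (fun s => b s * exp (∫ u in a..s, b u) * g s) (Icc a T) :=
    (hb.mul (ContinuousOn.rexp fun s hs => (hB s hs).continuousWithinAt)).mul hg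
  have hE := (hB t ht).neg.exp
  refine ((hE.add (hE.mul (hh.hasDerivWithinAt_intervalIntegral_Icc ht))).congr_of_mem hS
    ht).congr_deriv ?_
  have hexp : exp (-∫ u in a..t, b u) * exp (∫ u in a..t, b u) = 1 := by
    rw [← exp_add, neg_add_cancel, exp_zero]
  rw [hS t ht]
  linear_combination (b t * g t) * hexp

end

theorem stmt_2_general
    (T : ℝ) (hT : 0 < T)
    (b : ℝ → ℝ) (hb_cont : ContinuousOn b (Set.Icc 0 T))
    (K : Kernel ℝ ℝ) [IsMarkovKernel K]
    (hK_supp : ∀ x : ℝ, (K x) (Set.Iio 0) = 0)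
    (hK_cont : ∀ f : ℝ → ℝ, Continuous f → (∃ C : ℝ, ∀ y, |f y| ≤ C) →
      ContinuousOn (fun x => ∫ y, f y ∂(K x)) (Set.Ici 0))
    (hK_Ico : ContinuousOn (fun t => ((K t) (Set.Ico 0 (T - t))).toReal) (Set.Icc 0 T))
    (S : ℝ → ℝ) (hS_cont : ContinuousOn S (Set.Icc 0 T))
    (hS_eq : ∀ t ∈ Set.Icc (0:ℝ) T,
      S t = Real.exp (-(∫ u in (0:ℝ)..t, b u)) +
        Real.exp (-(∫ u in (0:ℝ)..t, b u)) *
          ∫ s in (0:ℝ)..t, b s * Real.exp (∫ u in (0:ℝ)..s, b u) *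
            (∫ v in Set.Ico (0:ℝ) (T - s), S (s + v) ∂(K s))) :
    ∃ S' : ℝ → ℝ, ContinuousOn S' (Set.Icc 0 T) ∧
      (∀ t ∈ Set.Icc (0:ℝ) T, HasDerivWithinAt S (S' t) (Set.Icc 0 T) t) ∧
      ∀ t ∈ Set.Icc (0:ℝ) T,
        -S' t + b t * ((∫ s in Set.Ico (0:ℝ) (T - t), S (t + s) ∂(K t)) - S t) = 0 := by
  obtain ⟨f, hf_unif, hf_eq⟩ := hS_cont.exists_boundedContinuous_uniformContinuous_eqOn hT.le
  have hf_cont : ContinuousOn (fun t => ∫ v in Set.Ico (0:ℝ) (T - t), f (t + v) ∂(K t))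
      (Set.Icc 0 T) := fun t₀ ht₀ =>
    tendsto_setIntegral_Ico_comp_add nhdsWithin_le_nhds
      (fun φ => ((hK_cont φ φ.continuous ⟨‖φ‖, φ.norm_coe_le_norm⟩) t₀ ht₀.1).mono
        Set.Icc_subset_Ici_self)
      hK_supp ((tendsto_const_nhds.sub tendsto_id).mono_left nhdsWithin_le_nhds)
      (hK_Ico t₀ ht₀) hf_unif
  have hg_cont : ContinuousOn (fun t => ∫ v in Set.Ico (0:ℝ) (T - t), S (t + v) ∂(K t))
      (Set.Icc 0 T) :=
    hf_cont.congr fun t ht => setIntegral_congr_fun measurableSet_Ico fun v hv =>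
      (hf_eq ⟨add_nonneg ht.1 hv.1, by linarith [hv.2]⟩).symm
  exact ⟨fun t => b t * ((∫ v in Set.Ico (0:ℝ) (T - t), S (t + v) ∂(K t)) - S t),
    hb_cont.mul (hg_cont.sub hS_cont),
    fun t ht => hasDerivWithinAt_of_eq_exp_neg_integral hb_cont hg_cont hS_eq ht,
    fun t _ => neg_add_cancel _⟩

/-- **Corollary 4.2 (integro-differential equation for the scale function).**
If `b` is continuous on `[0,T]`, `K` is a weakly continuous Markov kernel such that
`t ↦ K(t, [0,T-t))` is continuous on `[0,T]`, and `S` is continuous, bounded and satisfies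
the scale equation on `[0,T]`, then `S ∈ C¹([0,T])` and
`-S'(t) + b(t) (∫_{[0,T-t)} S(t+s) K(t,ds) - S(t)) = 0` on `[0,T]`. -/
theorem stmt_2
    (T : ℝ) (hT : 0 < T)
    (b : ℝ → ℝ) (hb_cont : ContinuousOn b (Set.Icc 0 T))
    (hb_nonneg : ∀ t ∈ Set.Icc (0:ℝ) T, 0 ≤ b t)
    (K : Kernel ℝ ℝ) [IsMarkovKernel K]
    (hK_supp : ∀ x : ℝ, (K x) (Set.Iio 0) = 0)
    (hK_cont : ∀ f : ℝ → ℝ, Continuous f → (∃ C : ℝ, ∀ y, |f y| ≤ C) →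
      ContinuousOn (fun x => ∫ y, f y ∂(K x)) (Set.Ici 0))
    (hK_Ico : ContinuousOn (fun t => ((K t) (Set.Ico 0 (T - t))).toReal) (Set.Icc 0 T))
    (S : ℝ → ℝ) (hS_cont : ContinuousOn S (Set.Icc 0 T))
    (hS_bdd : ∃ C : ℝ, ∀ t ∈ Set.Icc (0:ℝ) T, |S t| ≤ C)
    (hS_eq : ∀ t ∈ Set.Icc (0:ℝ) T,
      S t = Real.exp (-(∫ u in (0:ℝ)..t, b u)) +
        Real.exp (-(∫ u in (0:ℝ)..t, b u)) *
          ∫ s in (0:ℝ)..t, b s * Real.exp (∫ u in (0:ℝ)..s, b u) *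
            (∫ v in Set.Ico (0:ℝ) (T - s), S (s + v) ∂(K s))) :
    ∃ S' : ℝ → ℝ, ContinuousOn S' (Set.Icc 0 T) ∧
      (∀ t ∈ Set.Icc (0:ℝ) T, HasDerivWithinAt S (S' t) (Set.Icc 0 T) t) ∧
      ∀ t ∈ Set.Icc (0:ℝ) T,
        -S' t + b t * ((∫ s in Set.Ico (0:ℝ) (T - t), S (t + s) ∂(K t)) - S t) = 0 :=
  stmt_2_general T hT b hb_cont K hK_supp hK_cont hK_Ico S hS_cont hS_eq
end

section
/- Let T > 0, let b : [0,T] → (0,∞) be continuously differentiable and d : [0,T] → ℝ be continuous. Suppose S : [0,T] → ℝ is continuously differentiable and satisfies, for all t ∈ [0,T], S′(t) = b(t) (∫_tᵀ S(s) d(s) exp(−∫_tˢ d(u)du) ds − S(t)). Then S is twice differentiable on [0,T] and, for all t ∈ [0,T], S″(t) = (b′(t)/b(t) + d(t) − b(t)) S′(t). -/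
/-!
Writing `A` for a primitive of `d`, the kernel factorises as
`exp (-∫ u in t..s, d u) = exp (A t) * exp (-A s)`, so the integral `I t` in the equation is
`exp (A t)` times a primitive of `s ↦ S s * d s * exp (-A s)` evaluated between `t` and `T`.
It is therefore differentiable, with derivative `d t * I t - S t * d t`. Differentiating
`S' = b * (I - S)` and eliminating `I - S = S' / b` gives the second-order equation.
-/

open Set Real

/-- `∫ₜᵀ f(s) exp (-∫ₜˢ d) ds`; for `f = S * d` this is `∫ S(t + u) K(t, du)` over `[0, T - t]`. -/
noncomputable def discountedIntegral (f d : ℝ → ℝ) (T t : ℝ) : ℝ :=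
  ∫ s in t..T, f s * exp (-∫ u in t..s, d u)

theorem discountedIntegral_eq_exp_mul {d : ℝ → ℝ} (hd : Continuous d) (f : ℝ → ℝ) (T t : ℝ) :
    discountedIntegral f d T t =
      exp (∫ u in 0..t, d u) * ∫ s in t..T, f s * exp (-∫ u in 0..s, d u) := by
  rw [discountedIntegral, ← intervalIntegral.integral_const_mul]
  refine intervalIntegral.integral_congr fun s _ => ?_
  rw [← intervalIntegral.integral_interval_sub_left (hd.intervalIntegrable _ _)
    (hd.intervalIntegrable _ _), neg_sub, sub_eq_add_neg, exp_add]
  ring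

theorem hasDerivAt_discountedIntegral {f d : ℝ → ℝ} (hf : Continuous f) (hd : Continuous d)
    (T t : ℝ) :
    HasDerivAt (discountedIntegral f d T) (d t * discountedIntegral f d T t - f t) t := by
  set A : ℝ → ℝ := fun x => ∫ u in 0..x, d u
  set g : ℝ → ℝ := fun s => f s * exp (-A s)
  have hA : ∀ x, HasDerivAt A (d x) x := fun x =>
    intervalIntegral.integral_hasDerivAt_right (hd.intervalIntegrable _ _)
      (hd.stronglyMeasurableAtFilter _ _) hd.continuousAt
  have hg : Continuous g :=
    hf.mul (continuous_exp.comp (continuous_iff_continuousAt.2 fun x => (hA x).continuousAt).neg)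
  have hG : HasDerivAt (fun x => ∫ s in x..T, g s) (-g t) t :=
    intervalIntegral.integral_hasDerivAt_left (hg.intervalIntegrable _ _)
      (hg.stronglyMeasurableAtFilter _ _) hg.continuousAt
  have hfactor : discountedIntegral f d T = fun x => exp (A x) * ∫ s in x..T, g s :=
    funext (discountedIntegral_eq_exp_mul hd f T)
  have hexp : exp (A t) * exp (-A t) = 1 := by rw [← exp_add, add_neg_cancel, exp_zero]
  rw [hfactor]
  refine ((hA t).exp.mul hG).congr_deriv ?_
  linear_combination -f t * hexp

theorem discountedIntegral_congr_Icc {a T t : ℝ} {f f₁ d d₁ : ℝ → ℝ}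
    (hf : EqOn f f₁ (Icc a T)) (hd : EqOn d d₁ (Icc a T)) (ht : t ∈ Icc a T) :
    discountedIntegral f d T t = discountedIntegral f₁ d₁ T t := by
  have hT : T ∈ Icc a T := ⟨ht.1.trans ht.2, le_rfl⟩
  refine intervalIntegral.integral_congr fun s hs => ?_
  have hs : s ∈ Icc a T := uIcc_subset_Icc ht hT hs
  rw [hf hs, intervalIntegral.integral_congr (hd.mono (uIcc_subset_Icc ht hs))]

theorem ContinuousOn.exists_continuous_eqOn_Icc {a b : ℝ} {f : ℝ → ℝ} (hab : a ≤ b)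
    (hf : ContinuousOn f (Icc a b)) : ∃ g : ℝ → ℝ, Continuous g ∧ EqOn f g (Icc a b) :=
  ⟨IccExtend hab ((Icc a b).domRestrict f),
    (continuousOn_iff_continuous_domRestrict.mp hf).Icc_extend',
    fun _ hx => (IccExtend_of_mem hab ((Icc a b).domRestrict f) hx).symm⟩

theorem hasDerivWithinAt_discountedIntegral {a T t : ℝ} {f d : ℝ → ℝ}
    (hf : ContinuousOn f (Icc a T)) (hd : ContinuousOn d (Icc a T)) (ht : t ∈ Icc a T) :
    HasDerivWithinAt (discountedIntegral f d T) (d t * discountedIntegral f d T t - f t)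
      (Icc a T) t := by
  have haT : a ≤ T := ht.1.trans ht.2
  obtain ⟨f₁, hf₁c, hf₁⟩ := hf.exists_continuous_eqOn_Icc haT
  obtain ⟨d₁, hd₁c, hd₁⟩ := hd.exists_continuous_eqOn_Icc haT
  have h := (hasDerivAt_discountedIntegral hf₁c hd₁c T t).hasDerivWithinAt (s := Icc a T)
  rw [← hf₁ ht, ← hd₁ ht, ← discountedIntegral_congr_Icc hf₁ hd₁ ht] at h
  exact h.congr (fun x hx => discountedIntegral_congr_Icc hf₁ hd₁ hx)
    (discountedIntegral_congr_Icc hf₁ hd₁ ht)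

theorem stmt_3_general
    (T : ℝ)
    (b b' : ℝ → ℝ)
    (hb_pos : ∀ t ∈ Set.Icc (0:ℝ) T, 0 < b t)
    (hb_deriv : ∀ t ∈ Set.Icc (0:ℝ) T, HasDerivWithinAt b (b' t) (Set.Icc 0 T) t)
    (d : ℝ → ℝ) (hd_cont : ContinuousOn d (Set.Icc 0 T))
    (S S' : ℝ → ℝ)
    (hS_deriv : ∀ t ∈ Set.Icc (0:ℝ) T, HasDerivWithinAt S (S' t) (Set.Icc 0 T) t)
    (hS_eq : ∀ t ∈ Set.Icc (0:ℝ) T,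
      S' t = b t * ((∫ s in t..T, S s * d s * Real.exp (-(∫ u in t..s, d u))) - S t)) :
    ∃ S'' : ℝ → ℝ,
      (∀ t ∈ Set.Icc (0:ℝ) T, HasDerivWithinAt S' (S'' t) (Set.Icc 0 T) t) ∧
      ∀ t ∈ Set.Icc (0:ℝ) T, S'' t = (b' t / b t + d t - b t) * S' t := by
  set I := discountedIntegral (fun s => S s * d s) d T
  have hS'_eq : ∀ t ∈ Icc 0 T, S' t = b t * (I t - S t) := hS_eq
  have hS_cont : ContinuousOn S (Icc 0 T) := fun t ht => (hS_deriv t ht).continuousWithinAt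
  have hI : ∀ t ∈ Icc 0 T, HasDerivWithinAt I (d t * I t - S t * d t) (Icc 0 T) t :=
    fun t ht => hasDerivWithinAt_discountedIntegral (hS_cont.mul hd_cont) hd_cont ht
  refine ⟨fun t => (b' t / b t + d t - b t) * S' t, fun t ht => ?_, fun _ _ => rfl⟩
  have hS'' : HasDerivWithinAt S' (b' t * (I t - S t) + b t * (d t * I t - S t * d t - S' t))
      (Icc 0 T) t :=
    ((hb_deriv t ht).mul ((hI t ht).sub (hS_deriv t ht))).congr hS'_eq (hS'_eq t ht)
  refine hS''.congr_deriv ?_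
  have hb : b t ≠ 0 := (hb_pos t ht).ne'
  show _ = (b' t / b t + d t - b t) * S' t
  rw [hS'_eq t ht]
  field_simp
  ring

/-- **Section 4.3.3 (reduction to a second-order ODE).**
If `b ∈ C¹([0,T])` is positive, `d` is continuous on `[0,T]`, and `S ∈ C¹([0,T])` satisfies
`S'(t) = b(t) (∫_tᵀ S(s) d(s) e^{-∫_tˢ d} ds - S(t))`, then `S` is twice differentiable with
`S''(t) = (b'(t)/b(t) + d(t) - b(t)) S'(t)` on `[0,T]`. -/
theorem stmt_3
    (T : ℝ) (hT : 0 < T)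
    (b b' : ℝ → ℝ)
    (hb_pos : ∀ t ∈ Set.Icc (0:ℝ) T, 0 < b t)
    (hb_deriv : ∀ t ∈ Set.Icc (0:ℝ) T, HasDerivWithinAt b (b' t) (Set.Icc 0 T) t)
    (hb'_cont : ContinuousOn b' (Set.Icc 0 T))
    (d : ℝ → ℝ) (hd_cont : ContinuousOn d (Set.Icc 0 T))
    (S S' : ℝ → ℝ)
    (hS_deriv : ∀ t ∈ Set.Icc (0:ℝ) T, HasDerivWithinAt S (S' t) (Set.Icc 0 T) t)
    (hS'_cont : ContinuousOn S' (Set.Icc 0 T))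
    (hS_eq : ∀ t ∈ Set.Icc (0:ℝ) T,
      S' t = b t * ((∫ s in t..T, S s * d s * Real.exp (-(∫ u in t..s, d u))) - S t)) :
    ∃ S'' : ℝ → ℝ,
      (∀ t ∈ Set.Icc (0:ℝ) T, HasDerivWithinAt S' (S'' t) (Set.Icc 0 T) t) ∧
      ∀ t ∈ Set.Icc (0:ℝ) T, S'' t = (b' t / b t + d t - b t) * S' t :=
  stmt_3_general T b b' hb_pos hb_deriv d hd_cont S S' hS_deriv hS_eq
end

section
/- Let T > 0, let b : [0,T] → (0,∞) be continuously differentiable and d : [0,T] → ℝ be continuous. Define D = 1 + ∫₀ᵀ b(s) exp(−∫ₛᵀ (d(u) − b(u)) du) ds and S_T(t) = (1 + ∫_tᵀ b(s) exp(−∫ₛᵀ (d(u) − b(u)) du) ds) / D for t ∈ [0,T]. Then S_T is continuously differentiable on [0,T], S_T(0) = 1, S_T′(T) = −b(T) S_T(T), and for all t ∈ [0,T]: S_T′(t) = b(t) (∫_tᵀ S_T(s) d(s) exp(−∫_tˢ d(u)du) ds − S_T(t)). -/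
/-!
Write `E s = exp (-∫ₛᵀ (d - b))` and `N t = 1 + ∫ₜᵀ b E`, so that `S_T = N / N 0`. Since
`E' = (d - b) E`, the fundamental theorem of calculus gives `S_T' = -b E / N 0`, which is
continuous, and `N T = E T = 1` gives the boundary conditions. Equation (4.9) then reduces to
`∫ₜᵀ N(s) d(s) exp (-∫ₜˢ d) ds = N t - E t`, an integration by parts: `(E - N)' = d E`, so the
integrand is the derivative of `(E - N)(s) exp (-∫ₜˢ d)`.
-/

open Set Real intervalIntegral

section FTC

variable {f : ℝ → ℝ} {a c x₀ t : ℝ}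

theorem ContinuousOn.hasDerivWithinAt_integral_Icc (hf : ContinuousOn f (Icc a c))
    (hx₀ : x₀ ∈ Icc a c) (ht : t ∈ Icc a c) :
    HasDerivWithinAt (fun s => ∫ u in x₀..s, f u) (f t) (Icc a c) t := by
  have : Fact (t ∈ Icc a c) := ⟨ht⟩
  exact integral_hasDerivWithinAt_right (hf.mono (uIcc_subset_Icc hx₀ ht)).intervalIntegrable
    (hf.stronglyMeasurableAtFilter_nhdsWithin measurableSet_Icc t) (hf t ht)

theorem ContinuousOn.hasDerivWithinAt_integral_left_Icc (hf : ContinuousOn f (Icc a c))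
    (hx₀ : x₀ ∈ Icc a c) (ht : t ∈ Icc a c) :
    HasDerivWithinAt (fun s => ∫ u in s..x₀, f u) (-f t) (Icc a c) t := by
  simpa only [integral_symm x₀] using (hf.hasDerivWithinAt_integral_Icc hx₀ ht).fun_neg

end FTC

noncomputable def meanGrowth (b d : ℝ → ℝ) (T s : ℝ) : ℝ :=
  exp (-(∫ u in s..T, (d u - b u)))

noncomputable def unnormalizedScale (b d : ℝ → ℝ) (T t : ℝ) : ℝ :=
  1 + ∫ s in t..T, b s * meanGrowth b d T s

section ScaleFunction

variable {b d : ℝ → ℝ} {a T t : ℝ}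

@[simp]
theorem meanGrowth_self : meanGrowth b d T T = 1 := by
  simp [meanGrowth]

@[simp]
theorem unnormalizedScale_self : unnormalizedScale b d T T = 1 := by
  simp [unnormalizedScale]

theorem hasDerivWithinAt_meanGrowth (hb : ContinuousOn b (Icc a T)) (hd : ContinuousOn d (Icc a T))
    (ht : t ∈ Icc a T) :
    HasDerivWithinAt (meanGrowth b d T) (meanGrowth b d T t * (d t - b t)) (Icc a T) t := by
  have hT : T ∈ Icc a T := ⟨ht.1.trans ht.2, le_rfl⟩
  unfold meanGrowth
  simpa only [neg_neg] using ((hd.fun_sub hb).hasDerivWithinAt_integral_left_Icc hT ht).fun_neg.exp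

theorem continuousOn_meanGrowth (hb : ContinuousOn b (Icc a T)) (hd : ContinuousOn d (Icc a T)) :
    ContinuousOn (meanGrowth b d T) (Icc a T) :=
  fun _ ht => (hasDerivWithinAt_meanGrowth hb hd ht).continuousWithinAt

theorem hasDerivWithinAt_unnormalizedScale (hb : ContinuousOn b (Icc a T))
    (hd : ContinuousOn d (Icc a T)) (ht : t ∈ Icc a T) :
    HasDerivWithinAt (unnormalizedScale b d T) (-(b t * meanGrowth b d T t)) (Icc a T) t := by
  have hT : T ∈ Icc a T := ⟨ht.1.trans ht.2, le_rfl⟩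
  exact ((hb.mul (continuousOn_meanGrowth hb hd)).hasDerivWithinAt_integral_left_Icc hT ht
    |>.const_add 1)

theorem one_le_unnormalizedScale (hb : ∀ s ∈ Icc t T, 0 ≤ b s) (htT : t ≤ T) :
    1 ≤ unnormalizedScale b d T t :=
  le_add_of_nonneg_right <| integral_nonneg htT fun s hs => mul_nonneg (hb s hs) (exp_pos _).le

theorem integral_unnormalizedScale_mul_exp_neg_integral (hb : ContinuousOn b (Icc t T))
    (hd : ContinuousOn d (Icc t T)) (htT : t ≤ T) :
    ∫ s in t..T, unnormalizedScale b d T s * d s * exp (-(∫ u in t..s, d u)) =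
      unnormalizedScale b d T t - meanGrowth b d T t := by
  set w : ℝ → ℝ := fun s => exp (-(∫ u in t..s, d u))
  have ht : t ∈ Icc t T := ⟨le_rfl, htT⟩
  have hw : ∀ s ∈ Icc t T, HasDerivWithinAt w (w s * -d s) (Icc t T) s :=
    fun s hs => (hd.hasDerivWithinAt_integral_Icc ht hs).fun_neg.exp
  have hu : ∀ s ∈ Icc t T,
      HasDerivWithinAt (fun s => meanGrowth b d T s - unnormalizedScale b d T s)
        (meanGrowth b d T s * d s) (Icc t T) s := fun s hs =>
    ((hasDerivWithinAt_meanGrowth hb hd hs).fun_sub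
      (hasDerivWithinAt_unnormalizedScale hb hd hs)).congr_deriv (by ring)
  have hw_cont : ContinuousOn w (Icc t T) := fun s hs => (hw s hs).continuousWithinAt
  rw [← uIcc_of_le htT] at hu hw
  have parts := integral_deriv_mul_eq_sub_of_hasDerivWithinAt hu hw
    (((continuousOn_meanGrowth hb hd).mul hd).intervalIntegrable_of_Icc htT)
    ((hw_cont.mul hd.fun_neg).intervalIntegrable_of_Icc htT)
  have hwt : w t = 1 := by simp [w]
  simp only [meanGrowth_self, unnormalizedScale_self, sub_self, zero_mul, hwt, mul_one, zero_sub,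
    neg_sub] at parts
  rw [← parts]
  congr 1 with s
  ring

end ScaleFunction

theorem stmt_4_general
    (T : ℝ) (hT : 0 < T)
    (b b' : ℝ → ℝ)
    (hb_pos : ∀ t ∈ Set.Icc (0:ℝ) T, 0 < b t)
    (hb_deriv : ∀ t ∈ Set.Icc (0:ℝ) T, HasDerivWithinAt b (b' t) (Set.Icc 0 T) t)
    (d : ℝ → ℝ) (hd_cont : ContinuousOn d (Set.Icc 0 T))
    (D : ℝ) (ST : ℝ → ℝ)
    (hD : D = 1 + ∫ s in (0:ℝ)..T, b s * Real.exp (-(∫ u in s..T, (d u - b u))))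
    (hST : ∀ t, ST t =
      (1 + ∫ s in t..T, b s * Real.exp (-(∫ u in s..T, (d u - b u)))) / D) :
    ∃ ST' : ℝ → ℝ, ContinuousOn ST' (Set.Icc 0 T) ∧
      (∀ t ∈ Set.Icc (0:ℝ) T, HasDerivWithinAt ST (ST' t) (Set.Icc 0 T) t) ∧
      ST 0 = 1 ∧ ST' T = -(b T) * ST T ∧
      ∀ t ∈ Set.Icc (0:ℝ) T,
        ST' t = b t * ((∫ s in t..T, ST s * d s * Real.exp (-(∫ u in t..s, d u))) - ST t) := by
  have hb : ContinuousOn b (Icc 0 T) := fun t ht => (hb_deriv t ht).continuousWithinAt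
  have hN0 : 0 < unnormalizedScale b d T 0 :=
    one_pos.trans_le (one_le_unnormalizedScale (fun s hs => (hb_pos s hs).le) hT.le)
  obtain rfl : ST = fun t => unnormalizedScale b d T t / unnormalizedScale b d T 0 :=
    funext fun t => by rw [hST, hD]; rfl
  refine ⟨fun t => -(b t * meanGrowth b d T t) / unnormalizedScale b d T 0, ?_, ?_,
    div_self hN0.ne', ?_, ?_⟩
  · exact (hb.mul (continuousOn_meanGrowth hb hd_cont)).neg.div_const _
  · exact fun t ht => (hasDerivWithinAt_unnormalizedScale hb hd_cont ht).div_const _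
  · simp only [meanGrowth_self, unnormalizedScale_self]
    ring
  · intro t ht
    have hsub : Icc t T ⊆ Icc 0 T := Icc_subset_Icc_left ht.1
    simp only [div_mul_eq_mul_div, intervalIntegral.integral_div,
      integral_unnormalizedScale_mul_exp_neg_integral (hb.mono hsub) (hd_cont.mono hsub) ht.2]
    ring

/-- **Section 4.3.3 (explicit scale function for the inhomogeneous Markovian tree).**
With `D = 1 + ∫₀ᵀ b(s) e^{-∫ₛᵀ (d-b)} ds` and
`S_T(t) = (1 + ∫_tᵀ b(s) e^{-∫ₛᵀ (d-b)} ds) / D`, the function `S_T` is `C¹` on `[0,T]`,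
satisfies `S_T(0) = 1`, `S_T'(T) = -b(T) S_T(T)`, and solves the integro-differential
equation (4.9): `S_T'(t) = b(t) (∫_tᵀ S_T(s) d(s) e^{-∫_tˢ d} ds - S_T(t))`. -/
theorem stmt_4
    (T : ℝ) (hT : 0 < T)
    (b b' : ℝ → ℝ)
    (hb_pos : ∀ t ∈ Set.Icc (0:ℝ) T, 0 < b t)
    (hb_deriv : ∀ t ∈ Set.Icc (0:ℝ) T, HasDerivWithinAt b (b' t) (Set.Icc 0 T) t)
    (hb'_cont : ContinuousOn b' (Set.Icc 0 T))
    (d : ℝ → ℝ) (hd_cont : ContinuousOn d (Set.Icc 0 T))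
    (D : ℝ) (ST : ℝ → ℝ)
    (hD : D = 1 + ∫ s in (0:ℝ)..T, b s * Real.exp (-(∫ u in s..T, (d u - b u))))
    (hST : ∀ t, ST t =
      (1 + ∫ s in t..T, b s * Real.exp (-(∫ u in s..T, (d u - b u)))) / D) :
    ∃ ST' : ℝ → ℝ, ContinuousOn ST' (Set.Icc 0 T) ∧
      (∀ t ∈ Set.Icc (0:ℝ) T, HasDerivWithinAt ST (ST' t) (Set.Icc 0 T) t) ∧
      ST 0 = 1 ∧ ST' T = -(b T) * ST T ∧
      ∀ t ∈ Set.Icc (0:ℝ) T,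
        ST' t = b t * ((∫ s in t..T, ST s * d s * Real.exp (-(∫ u in t..s, d u))) - ST t) :=
  stmt_4_general T hT b b' hb_pos hb_deriv d hd_cont D ST hD hST
end

section
/- For f : [0,1] → ℝ, let V₋(f) = sup over all finite sequences 0 ≤ σ₀ < σ₁ < ⋯ < σ_m ≤ 1 of Σ_{i=1}^m max(f(σ_{i−1}) − f(σ_i), 0) (the negative variation of f). Let (fₙ) be a sequence of functions [0,1] → ℝ with V₋(fₙ) ≤ 1 for every n, let f : [0,1] → ℝ, and let (λₙ) be a sequence of strictly increasing continuous bijections of [0,1] onto itself such that sup_{t∈[0,1]} |λₙ(t) − t| → 0 and sup_{t∈[0,1]} |fₙ(λₙ(t)) − f(t)| → 0 as n → ∞. Then V₋(f) ≤ 1. -/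
/-! Since `λₙ` is strictly increasing on `[0,1]`, every negative variation sum of `Fₙ ∘ λₙ` is one
of `Fₙ`, hence at most `1`. A negative variation sum of `f` along a fixed partition involves
finitely many values of `f`, so it is the limit of the corresponding sums of `Fₙ ∘ λₙ`. -/

open MeasureTheory Filter Topology

/-- The set of "negative variation sums" of `f` over `[0,1]`: sums
`Σ_{i=1}^m max(f(σ_{i-1}) - f(σ_i), 0)` along finite sequences `0 ≤ σ₀ < ⋯ < σ_m ≤ 1`.
The negative variation `V₋(f)` is the supremum of this set; `V₋(f) ≤ 1` is equivalent to
every element of this set being `≤ 1`. -/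
def negVarSums (f : ℝ → ℝ) : Set ℝ :=
  {y | ∃ (m : ℕ) (σ : ℕ → ℝ), 0 ≤ σ 0 ∧ σ m ≤ 1 ∧ (∀ i < m, σ i < σ (i + 1)) ∧
    y = ∑ i ∈ Finset.range m, max (f (σ i) - f (σ (i + 1))) 0}

open Set

lemma le_of_le_succ_of_le {α : Type*} [Preorder α] {σ : ℕ → α} {m : ℕ} (hσ : ∀ i < m, σ i ≤ σ (i + 1))
    {i j : ℕ} (hij : i ≤ j) (hjm : j ≤ m) : σ i ≤ σ j := by
  induction j, hij using Nat.le_induction with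
  | base => exact le_rfl
  | succ j _ ih => exact (ih (by omega)).trans (hσ j (by omega))

lemma partition_mem_Icc {σ : ℕ → ℝ} {m : ℕ} (h0 : 0 ≤ σ 0) (hm : σ m ≤ 1)
    (hσ : ∀ i < m, σ i < σ (i + 1)) {i : ℕ} (hi : i ≤ m) : σ i ∈ Icc (0 : ℝ) 1 :=
  have hσ' : ∀ i < m, σ i ≤ σ (i + 1) := fun i hi => (hσ i hi).le
  ⟨h0.trans (le_of_le_succ_of_le hσ' i.zero_le hi), (le_of_le_succ_of_le hσ' hi le_rfl).trans hm⟩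

lemma negVarSums_comp_subset {F g : ℝ → ℝ} (hg_mono : StrictMonoOn g (Icc 0 1))
    (hg_maps : MapsTo g (Icc 0 1) (Icc 0 1)) : negVarSums (F ∘ g) ⊆ negVarSums F := by
  rintro y ⟨m, σ, h0, hm, hσ, rfl⟩
  have hmem : ∀ i ≤ m, σ i ∈ Icc (0 : ℝ) 1 := fun i => partition_mem_Icc h0 hm hσ
  refine ⟨m, g ∘ σ, (hg_maps (hmem 0 m.zero_le)).1, (hg_maps (hmem m le_rfl)).2,
    fun i hi => hg_mono (hmem i hi.le) (hmem (i + 1) hi) (hσ i hi), rfl⟩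

lemma upperBounds_negVarSums_of_tendsto {G : ℕ → ℝ → ℝ} {f : ℝ → ℝ} {c : ℝ}
    (hG : ∀ n, c ∈ upperBounds (negVarSums (G n)))
    (hlim : ∀ t ∈ Icc (0 : ℝ) 1, Tendsto (fun n => G n t) atTop (𝓝 (f t))) :
    c ∈ upperBounds (negVarSums f) := by
  rintro y ⟨m, σ, h0, hm, hσ, rfl⟩
  have hmem : ∀ i ≤ m, σ i ∈ Icc (0 : ℝ) 1 := fun i => partition_mem_Icc h0 hm hσ
  have hsum : Tendsto (fun n => ∑ i ∈ Finset.range m, max (G n (σ i) - G n (σ (i + 1))) 0)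
      atTop (𝓝 (∑ i ∈ Finset.range m, max (f (σ i) - f (σ (i + 1))) 0)) := by
    refine tendsto_finsetSum _ fun i hi => ?_
    have hi : i < m := Finset.mem_range.mp hi
    exact ((hlim _ (hmem i hi.le)).sub (hlim _ (hmem (i + 1) hi))).max tendsto_const_nhds
  exact le_of_tendsto' hsum fun n => hG n ⟨m, σ, h0, hm, hσ, rfl⟩

theorem stmt_12_general
    (F : ℕ → ℝ → ℝ) (f : ℝ → ℝ) (l : ℕ → ℝ → ℝ)
    (hF : ∀ n, ∀ y ∈ negVarSums (F n), y ≤ 1)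
    (hl_mono : ∀ n, StrictMonoOn (l n) (Set.Icc 0 1))
    (hl_bij : ∀ n, Set.BijOn (l n) (Set.Icc 0 1) (Set.Icc 0 1))
    (hF_unif : TendstoUniformlyOn (fun n t => F n (l n t)) f Filter.atTop
      (Set.Icc 0 1)) :
    ∀ y ∈ negVarSums f, y ≤ 1 :=
  upperBounds_negVarSums_of_tendsto (G := fun n => F n ∘ l n)
    (fun n _ hy => hF n _ (negVarSums_comp_subset (hl_mono n) (hl_bij n).mapsTo hy))
    fun _ ht => hF_unif.tendsto_at ht

/-- **Lemma 6.11.** The set `{f : V₋(f) ≤ 1}` is closed under Skorokhod convergence: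
if `V₋(Fₙ) ≤ 1` for all `n` and there are strictly increasing continuous bijections `λₙ`
of `[0,1]` onto itself with `λₙ → id` and `Fₙ ∘ λₙ → f` uniformly on `[0,1]`, then
`V₋(f) ≤ 1`. -/
theorem stmt_12
    (F : ℕ → ℝ → ℝ) (f : ℝ → ℝ) (l : ℕ → ℝ → ℝ)
    (hF : ∀ n, ∀ y ∈ negVarSums (F n), y ≤ 1)
    (hl_cont : ∀ n, ContinuousOn (l n) (Set.Icc 0 1))
    (hl_mono : ∀ n, StrictMonoOn (l n) (Set.Icc 0 1))
    (hl_bij : ∀ n, Set.BijOn (l n) (Set.Icc 0 1) (Set.Icc 0 1))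
    (hl_unif : TendstoUniformlyOn (fun n t => l n t) (fun t => t) Filter.atTop
      (Set.Icc 0 1))
    (hF_unif : TendstoUniformlyOn (fun n t => F n (l n t)) f Filter.atTop
      (Set.Icc 0 1)) :
    ∀ y ∈ negVarSums f, y ≤ 1 :=
  stmt_12_general F f l hF hl_mono hl_bij hF_unif
end

section
/- Let T > 0, let b : [0,T] → [0,∞) be bounded measurable with ‖b‖∞ = sup_{t∈[0,T]} b(t), and let μ be a Borel probability measure on [0,∞). Let f : [0,T] → ℝ be continuously differentiable and satisfy the boundary condition −f′(0) + b(0) (∫ f(min(y,T)) dμ(y) − f(0)) = 0. Then for every point x* ∈ [0,T] at which |f| attains its maximum over [0,T], one has (−f′(x*) − 2‖b‖∞ f(x*)) · f(x*) ≤ 0. -/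
open MeasureTheory Filter Topology

/-!
At a maximum point `x > 0` of `|f|`, the function `f²` is maximal from the left, so
`f'(x) f(x) ≥ 0` and the claim holds because `B ≥ 0`. At `x = 0` the boundary condition gives
`-f'(0) f(0) = b(0) (f(0)² - f(0) ∫ f(min(y,T)) dμ)`, and the integral is at most `|f(0)|` in
absolute value since `μ` is a probability measure, so the right side lies in `[0, 2 b(0) f(0)²]`.
-/

theorem IsLocalMaxOn.hasDerivWithinAt_nonneg_of_Icc_subset {g : ℝ → ℝ} {s : Set ℝ}
    {x y g' : ℝ} (hmax : IsLocalMaxOn g s x) (hg : HasDerivWithinAt g g' s x) (hyx : y < x)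
    (hsub : Set.Icc y x ⊆ s) : 0 ≤ g' := by
  have hcone : y - x ∈ posTangentConeAt s x := by
    apply sub_mem_posTangentConeAt_of_segment_subset
    rwa [segment_eq_Icc' x y, min_eq_right hyx.le, max_eq_left hyx.le]
  have hnonpos : (y - x) * g' ≤ 0 := by
    simpa using hmax.hasFDerivWithinAt_nonpos hg.hasFDerivWithinAt hcone
  nlinarith

theorem IsMaxOn.sq_of_abs {f : ℝ → ℝ} {s : Set ℝ} {x : ℝ}
    (hmax : IsMaxOn (fun t => |f t|) s x) : IsMaxOn (fun t => f t ^ 2) s x :=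
  fun t ht => show f t ^ 2 ≤ f x ^ 2 from sq_le_sq.2 (hmax ht)

theorem IsMaxOn.deriv_mul_nonneg_of_abs {f : ℝ → ℝ} {s : Set ℝ} {x y f'x : ℝ}
    (hmax : IsMaxOn (fun t => |f t|) s x) (hf : HasDerivWithinAt f f'x s x) (hyx : y < x)
    (hsub : Set.Icc y x ⊆ s) : 0 ≤ f'x * f x := by
  have := hmax.sq_of_abs.localize.hasDerivWithinAt_nonneg_of_Icc_subset (hf.fun_pow 2) hyx hsub
  norm_num at this
  linarith

theorem abs_setIntegral_le_of_ae_mem {α : Type*} [MeasurableSpace α] {μ : Measure α}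
    [IsProbabilityMeasure μ] {s : Set α} (hs : ∀ᵐ y ∂μ, y ∈ s) {g : α → ℝ} {C : ℝ}
    (hg : ∀ y ∈ s, |g y| ≤ C) : |∫ y in s, g y ∂μ| ≤ C := by
  rw [Measure.restrict_eq_self_of_ae_mem hs]
  simpa using norm_integral_le_of_norm_le_const
    (hs.mono fun y hy => (Real.norm_eq_abs (g y)).trans_le (hg y hy))

theorem neg_mul_le_two_mul_mul_sq_of_boundary {d u I β B : ℝ} (hbc : -d + β * (I - u) = 0)
    (hI : |I| ≤ |u|) (hβ : 0 ≤ β) (hβB : β ≤ B) : -d * u ≤ 2 * B * u ^ 2 := by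
  have hIu : |I * u| ≤ u ^ 2 := by
    rw [abs_mul, sq, ← abs_mul_abs_self u]
    exact mul_le_mul_of_nonneg_right hI (abs_nonneg u)
  have hlow : 0 ≤ u ^ 2 - I * u := by linarith [le_abs_self (I * u)]
  have hupp : u ^ 2 - I * u ≤ 2 * u ^ 2 := by linarith [neg_abs_le (I * u)]
  calc -d * u = β * (u ^ 2 - I * u) := by linear_combination u * hbc
    _ ≤ B * (u ^ 2 - I * u) := mul_le_mul_of_nonneg_right hβB hlow
    _ ≤ B * (2 * u ^ 2) := mul_le_mul_of_nonneg_left hupp (hβ.trans hβB)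
    _ = 2 * B * u ^ 2 := by ring

theorem stmt_15_general
    (T : ℝ)
    (b : ℝ → ℝ)
    (hb_nonneg : ∀ t ∈ Set.Icc (0:ℝ) T, 0 ≤ b t)
    (hb_bdd : BddAbove (b '' Set.Icc 0 T))
    (B : ℝ) (hB : B = sSup (b '' Set.Icc 0 T))
    (μ : Measure ℝ) [IsProbabilityMeasure μ]
    (hμ : μ (Set.Iio 0) = 0)
    (f f' : ℝ → ℝ)
    (hf_deriv : ∀ t ∈ Set.Icc (0:ℝ) T, HasDerivWithinAt f (f' t) (Set.Icc 0 T) t)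
    (hbc : -f' 0 + b 0 * ((∫ y in Set.Ici (0:ℝ), f (min y T) ∂μ) - f 0) = 0) :
    ∀ x ∈ Set.Icc (0:ℝ) T, IsMaxOn (fun t => |f t|) (Set.Icc 0 T) x →
      (-f' x - 2 * B * f x) * f x ≤ 0 := by
  intro x hx hmax
  have h0 : (0:ℝ) ∈ Set.Icc 0 T := ⟨le_rfl, hx.1.trans hx.2⟩
  have hb0B : b 0 ≤ B := hB ▸ le_csSup hb_bdd ⟨0, h0, rfl⟩
  have hB_nonneg : 0 ≤ B := (hb_nonneg 0 h0).trans hb0B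
  suffices -f' x * f x ≤ 2 * B * f x ^ 2 by linarith
  rcases hx.1.eq_or_lt with rfl | hpos
  · have hμ_ae : ∀ᵐ y ∂μ, y ∈ Set.Ici (0:ℝ) := by
      rwa [ae_iff, ← Set.compl_def, Set.compl_Ici]
    have hI := abs_setIntegral_le_of_ae_mem hμ_ae (g := fun y => f (min y T))
      fun y hy => hmax ⟨le_min hy h0.2, min_le_right y T⟩
    exact neg_mul_le_two_mul_mul_sq_of_boundary hbc hI (hb_nonneg 0 h0) hb0B
  · have := hmax.deriv_mul_nonneg_of_abs (hf_deriv x hx) hpos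
      (Set.Icc_subset_Icc le_rfl hx.2)
    linarith [mul_nonneg hB_nonneg (sq_nonneg (f x))]

/-- **Dissipativity estimate from the proof of Proposition 3.5.**
Let `b : [0,T] → [0,∞)` be bounded measurable with `B = ‖b‖∞`, `μ` a Borel probability
measure on `[0,∞)`, and `f ∈ C¹([0,T])` satisfying the boundary condition
`-f'(0) + b(0)(∫ f(min(y,T)) dμ(y) - f(0)) = 0`. Then at any maximum point `x*` of `|f|`
on `[0,T]` one has `(-f'(x*) - 2 B f(x*)) f(x*) ≤ 0`. -/
theorem stmt_15
    (T : ℝ) (hT : 0 < T)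
    (b : ℝ → ℝ) (hb_meas : Measurable b)
    (hb_nonneg : ∀ t ∈ Set.Icc (0:ℝ) T, 0 ≤ b t)
    (hb_bdd : BddAbove (b '' Set.Icc 0 T))
    (B : ℝ) (hB : B = sSup (b '' Set.Icc 0 T))
    (μ : Measure ℝ) [IsProbabilityMeasure μ]
    (hμ : μ (Set.Iio 0) = 0)
    (f f' : ℝ → ℝ)
    (hf_deriv : ∀ t ∈ Set.Icc (0:ℝ) T, HasDerivWithinAt f (f' t) (Set.Icc 0 T) t)
    (hf'_cont : ContinuousOn f' (Set.Icc 0 T))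
    (hbc : -f' 0 + b 0 * ((∫ y in Set.Ici (0:ℝ), f (min y T) ∂μ) - f 0) = 0) :
    ∀ x ∈ Set.Icc (0:ℝ) T, IsMaxOn (fun t => |f t|) (Set.Icc 0 T) x →
      (-f' x - 2 * B * f x) * f x ≤ 0 :=
  stmt_15_general T b hb_nonneg hb_bdd B hB μ hμ f f' hf_deriv hbc
end

section
/- Let T > 0, let b : [0,T] → [0,∞) be bounded measurable with ‖b‖∞ = sup_{t∈[0,T]} b(t), and let μ be a Borel probability measure on [0,∞). Then for every λ > ‖b‖∞ and every continuous g : [0,T] → ℝ, there exists a continuously differentiable f : [0,T] → ℝ such that λ f(t) + f′(t) = g(t) for all t ∈ [0,T] and −f′(0) + b(0) (∫ f(min(y,T)) dμ(y) − f(0)) = 0. -/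
open MeasureTheory Filter Topology

/-! The solutions of `λ f + f' = g` are given by variation of constants,
`f t = e^{-λ t} (c + ∫₀ᵗ e^{λ s} g s ds)`, after extending `g` continuously to `ℝ` by clamping.
The boundary functional is affine in `c`, with slope `λ + b(0) (∫ e^{-λ (y ∧ T)} dμ - 1)`, which is
at least `λ - b(0) > 0` because the integral lies in `[0, 1]`; so some `c` makes it vanish. -/

open Set

noncomputable def linearODESol (lam c : ℝ) (g : ℝ → ℝ) (t : ℝ) : ℝ :=
  Real.exp (-(lam * t)) * (c + ∫ s in (0:ℝ)..t, Real.exp (lam * s) * g s)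

section linearODESol

variable {lam c : ℝ} {g : ℝ → ℝ}

theorem linearODESol_zero : linearODESol lam c g 0 = c := by
  simp [linearODESol]

theorem linearODESol_eq_add (t : ℝ) :
    linearODESol lam c g t = c * Real.exp (-(lam * t)) + linearODESol lam 0 g t := by
  simp only [linearODESol]
  ring

theorem hasDerivAt_linearODESol (hg : Continuous g) (t : ℝ) :
    HasDerivAt (linearODESol lam c g) (g t - lam * linearODESol lam c g t) t := by
  have hexp : HasDerivAt (fun t => Real.exp (-(lam * t))) (Real.exp (-(lam * t)) * -lam) t := by
    simpa using ((hasDerivAt_id t).const_mul lam).neg.exp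
  have hint : HasDerivAt (fun t => c + ∫ s in (0:ℝ)..t, Real.exp (lam * s) * g s)
      (Real.exp (lam * t) * g t) t :=
    ((by fun_prop : Continuous fun s => Real.exp (lam * s) * g s).integral_hasStrictDerivAt
      0 t).hasDerivAt.const_add c
  have hinv : Real.exp (-(lam * t)) * Real.exp (lam * t) = 1 := by
    rw [← Real.exp_add, neg_add_cancel, Real.exp_zero]
  refine (hexp.mul hint).congr_deriv ?_
  simp only [linearODESol]
  linear_combination g t * hinv

theorem continuous_linearODESol (hg : Continuous g) : Continuous (linearODESol lam c g) :=
  continuous_iff_continuousAt.2 fun t => (hasDerivAt_linearODESol hg t).continuousAt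

end linearODESol

theorem integrableOn_Ici_comp_min {φ : ℝ → ℝ} (hφ : Continuous φ) (μ : Measure ℝ)
    [IsFiniteMeasure μ] (a T : ℝ) : IntegrableOn (fun y => φ (min y T)) (Ici a) μ := by
  obtain ⟨M, hM⟩ := (isCompact_Icc (a := min a T) (b := T)).exists_bound_of_continuousOn
    hφ.continuousOn
  refine Integrable.mono' (integrable_const M) (by fun_prop) ?_
  filter_upwards [ae_restrict_mem measurableSet_Ici] with y hy
  exact hM _ ⟨min_le_min_right T hy, min_le_right y T⟩

theorem setIntegral_Ici_exp_comp_min_le_one (μ : Measure ℝ) [IsProbabilityMeasure μ]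
    {lam T : ℝ} (hlam : 0 ≤ lam) (hT : 0 ≤ T) :
    ∫ y in Ici 0, Real.exp (-(lam * min y T)) ∂μ ≤ 1 := by
  have hbound : ∀ y ∈ Ici (0:ℝ), ‖Real.exp (-(lam * min y T))‖ ≤ 1 := fun y hy => by
    rw [Real.norm_of_nonneg (Real.exp_pos _).le, Real.exp_le_one_iff, neg_nonpos]
    exact mul_nonneg hlam (le_min hy hT)
  calc _ ≤ ‖∫ y in Ici 0, Real.exp (-(lam * min y T)) ∂μ‖ := Real.le_norm_self _
    _ ≤ 1 * μ.real (Ici 0) := norm_setIntegral_le_of_norm_le_const (measure_lt_top μ _) hbound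
    _ ≤ 1 := by simp [measureReal_le_one]

theorem setIntegral_linearODESol_comp_min {lam : ℝ} (c : ℝ) {g : ℝ → ℝ} (hg : Continuous g)
    (μ : Measure ℝ) [IsFiniteMeasure μ] (T : ℝ) :
    ∫ y in Ici 0, linearODESol lam c g (min y T) ∂μ =
      c * (∫ y in Ici 0, Real.exp (-(lam * min y T)) ∂μ) +
        ∫ y in Ici 0, linearODESol lam 0 g (min y T) ∂μ := by
  simp_rw [linearODESol_eq_add (c := c)]
  rw [integral_add, integral_const_mul]
  · exact (integrableOn_Ici_comp_min (φ := fun t => Real.exp (-(lam * t))) (by fun_prop)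
      μ 0 T).const_mul c
  · exact integrableOn_Ici_comp_min (continuous_linearODESol hg) μ 0 T

theorem exists_linearODESol_boundary {g : ℝ → ℝ} (hg : Continuous g) (μ : Measure ℝ)
    [IsProbabilityMeasure μ] {T β lam : ℝ} (hT : 0 ≤ T) (hβ : 0 ≤ β) (hβlam : β < lam) :
    ∃ c, -(g 0 - lam * linearODESol lam c g 0) +
      β * ((∫ y in Ici 0, linearODESol lam c g (min y T) ∂μ) - linearODESol lam c g 0) = 0 := by
  set A := ∫ y in Ici 0, Real.exp (-(lam * min y T)) ∂μ
  set H := ∫ y in Ici 0, linearODESol lam 0 g (min y T) ∂μ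
  have hA₀ : 0 ≤ A := setIntegral_nonneg measurableSet_Ici fun y _ => (Real.exp_pos _).le
  have hA₁ : A ≤ 1 := setIntegral_Ici_exp_comp_min_le_one μ (hβ.trans hβlam.le) hT
  have hslope : 0 < lam + β * (A - 1) := by nlinarith
  refine ⟨(g 0 - β * H) / (lam + β * (A - 1)), ?_⟩
  rw [setIntegral_linearODESol_comp_min _ hg, linearODESol_zero]
  field_simp
  ring

theorem stmt_16_general
    (T : ℝ) (hT : 0 < T)
    (b : ℝ → ℝ)
    (hb_nonneg : ∀ t ∈ Set.Icc (0:ℝ) T, 0 ≤ b t)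
    (hb_bdd : BddAbove (b '' Set.Icc 0 T))
    (B : ℝ) (hB : B = sSup (b '' Set.Icc 0 T))
    (μ : Measure ℝ) [IsProbabilityMeasure μ]
    (lam : ℝ) (hlam : B < lam)
    (g : ℝ → ℝ) (hg : ContinuousOn g (Set.Icc 0 T)) :
    ∃ f f' : ℝ → ℝ,
      (∀ t ∈ Set.Icc (0:ℝ) T, HasDerivWithinAt f (f' t) (Set.Icc 0 T) t) ∧
      ContinuousOn f' (Set.Icc 0 T) ∧
      (∀ t ∈ Set.Icc (0:ℝ) T, lam * f t + f' t = g t) ∧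
      -f' 0 + b 0 * ((∫ y in Set.Ici (0:ℝ), f (min y T) ∂μ) - f 0) = 0 := by
  have h0T : (0:ℝ) ∈ Icc 0 T := ⟨le_rfl, hT.le⟩
  set g' := IccExtend hT.le ((Icc 0 T).domRestrict g)
  have hg' : Continuous g' := hg.domRestrict.Icc_extend'
  have hb0_lt : b 0 < lam := (le_csSup hb_bdd ⟨0, h0T, rfl⟩).trans_lt (hB ▸ hlam)
  obtain ⟨c, hc⟩ := exists_linearODESol_boundary hg' μ hT.le (hb_nonneg 0 h0T) hb0_lt
  refine ⟨linearODESol lam c g', fun t => g' t - lam * linearODESol lam c g' t,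
    fun t _ => (hasDerivAt_linearODESol hg' t).hasDerivWithinAt,
    (hg'.sub (continuous_const.mul (continuous_linearODESol hg'))).continuousOn,
    fun t ht => (add_sub_cancel _ _).trans (IccExtend_of_mem _ _ ht), hc⟩

/-- **Resolvent (range) step in the proof of Proposition 3.5.**
Let `b : [0,T] → [0,∞)` be bounded measurable with `B = ‖b‖∞` and `μ` a Borel probability
measure on `[0,∞)`. For every `λ > B` and every continuous `g : [0,T] → ℝ` there is an
`f ∈ C¹([0,T])` with `λ f + f' = g` on `[0,T]` and
`-f'(0) + b(0)(∫ f(min(y,T)) dμ(y) - f(0)) = 0`. -/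
theorem stmt_16
    (T : ℝ) (hT : 0 < T)
    (b : ℝ → ℝ) (hb_meas : Measurable b)
    (hb_nonneg : ∀ t ∈ Set.Icc (0:ℝ) T, 0 ≤ b t)
    (hb_bdd : BddAbove (b '' Set.Icc 0 T))
    (B : ℝ) (hB : B = sSup (b '' Set.Icc 0 T))
    (μ : Measure ℝ) [IsProbabilityMeasure μ]
    (hμ : μ (Set.Iio 0) = 0)
    (lam : ℝ) (hlam : B < lam)
    (g : ℝ → ℝ) (hg : ContinuousOn g (Set.Icc 0 T)) :
    ∃ f f' : ℝ → ℝ,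
      (∀ t ∈ Set.Icc (0:ℝ) T, HasDerivWithinAt f (f' t) (Set.Icc 0 T) t) ∧
      ContinuousOn f' (Set.Icc 0 T) ∧
      (∀ t ∈ Set.Icc (0:ℝ) T, lam * f t + f' t = g t) ∧
      -f' 0 + b 0 * ((∫ y in Set.Ici (0:ℝ), f (min y T) ∂μ) - f 0) = 0 :=
  stmt_16_general T hT b hb_nonneg hb_bdd B hB μ lam hlam g hg
end

section
/- Let b : [0,∞) → [0,∞) be a function, K a Markov kernel from [0,∞) to [0,∞), and S : [0,∞) → (0,∞) a differentiable function such that KS(x) := ∫ S(x+y) K(x,dy) is finite for every x ≥ 0 and S′(x) = b(x) (KS(x) − S(x)) for all x ≥ 0 (i.e. S is harmonic for the generator Lf(x) = −f′(x) + b(x)∫(f(x+y) − f(x))K(x,dy)). Then for every differentiable f : [0,∞) → ℝ such that ∫ S(x+y)|f(x+y)| K(x,dy) < ∞ for all x, and for all x ≥ 0: L(fS)(x)/S(x) = −f′(x) + (b(x) KS(x)/S(x)) · ( (∫ S(x+y) f(x+y) K(x,dy)) / KS(x) − f(x) ). -/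
open MeasureTheory ProbabilityTheory Filter Topology

/-!
Write `KS(x) = ∫ S(x+y) K(x,dy)`. By the product rule `(fS)' = f'S + fS'`, and harmonicity
replaces `S'` by `b (KS - S)`; the `f b S` terms then cancel and what is left is the generator
with rate `b KS / S` and the normalized kernel `S(x+y) K(x,dy) / KS(x)`. The division by `KS(x)`
is legitimate because `S > 0` on `[0, ∞)` and `K(x, ·)` is a probability measure carried by
`[0, ∞)`, so `KS(x) > 0`.
-/

lemma ae_nonneg_of_measure_Iio_zero {μ : Measure ℝ} (hμ : μ (Set.Iio 0) = 0) :
    ∀ᵐ y ∂μ, 0 ≤ y := by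
  rw [ae_iff]
  simpa [Set.Iio, not_le] using hμ

lemma integral_pos_of_ae_pos {α : Type*} [MeasurableSpace α] {μ : Measure α} [NeZero μ]
    {g : α → ℝ} (hg : Integrable g μ) (hpos : ∀ᵐ a ∂μ, 0 < g a) :
    0 < ∫ a, g a ∂μ := by
  rw [integral_pos_iff_support_of_nonneg_ae (hpos.mono fun _ h => h.le) hg]
  have hfull : μ Set.univ ≤ μ (Function.support g) :=
    measure_mono_ae (hpos.mono fun _ h _ => h.ne')
  exact (NeZero.pos (μ Set.univ)).trans_le hfull

lemma integral_sub_const_of_isProbabilityMeasure {α : Type*} [MeasurableSpace α]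
    {μ : Measure α} [IsProbabilityMeasure μ] {g : α → ℝ} (hg : Integrable g μ) (c : ℝ) :
    ∫ a, (g a - c) ∂μ = ∫ a, g a ∂μ - c := by
  simp [integral_sub hg (integrable_const c)]

lemma integrable_mul_of_integrable_mul_abs {α : Type*} [MeasurableSpace α] {μ : Measure α}
    {f S : α → ℝ} (h : Integrable (fun a => S a * |f a|) μ)
    (hmeas : AEStronglyMeasurable (fun a => S a * f a) μ) (hS : ∀ᵐ a ∂μ, 0 ≤ S a) :
    Integrable (fun a => S a * f a) μ :=
  h.mono' hmeas (hS.mono fun a ha => by rw [Real.norm_eq_abs, abs_mul, abs_of_nonneg ha])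

lemma htransform_generator_identity {b s s' ks ksf f f' : ℝ} (hs : s ≠ 0) (hks : ks ≠ 0)
    (hharm : s' = b * (ks - s)) :
    (-(f' * s + f * s') + b * (ksf - f * s)) / s = -f' + b * ks / s * (ksf / ks - f) := by
  subst hharm
  field_simp
  ring

/-- **Doob h-transform identity from the proof of Theorem 4.7.**
If `S > 0` is differentiable and harmonic for the generator
`Lf(x) = -f'(x) + b(x) ∫ (f(x+y) - f(x)) K(x,dy)`, i.e.
`S'(x) = b(x) (KS(x) - S(x))` where `KS(x) = ∫ S(x+y) K(x,dy)`, then for differentiable `f`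
with `∫ S(x+y)|f(x+y)| K(x,dy) < ∞`:
`L(fS)(x)/S(x) = -f'(x) + (b(x) KS(x)/S(x)) (K(Sf)(x)/KS(x) - f(x))`. -/
theorem stmt_18
    (b : ℝ → ℝ)
    (K : Kernel ℝ ℝ) [IsMarkovKernel K]
    (hK_supp : ∀ x : ℝ, (K x) (Set.Iio 0) = 0)
    (S : ℝ → ℝ) (hS_pos : ∀ x ≥ (0:ℝ), 0 < S x) (hS_diff : Differentiable ℝ S)
    (hKS_int : ∀ x ≥ (0:ℝ), Integrable (fun y => S (x + y)) (K x))
    (hharm : ∀ x ≥ (0:ℝ), deriv S x = b x * ((∫ y, S (x + y) ∂(K x)) - S x))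
    (f : ℝ → ℝ) (hf_diff : Differentiable ℝ f)
    (hint : ∀ x ≥ (0:ℝ), Integrable (fun y => S (x + y) * |f (x + y)|) (K x)) :
    ∀ x ≥ (0:ℝ),
      (-(deriv (fun z => f z * S z) x) +
          b x * ∫ y, (f (x + y) * S (x + y) - f x * S x) ∂(K x)) / S x =
        -(deriv f x) +
          (b x * (∫ y, S (x + y) ∂(K x)) / S x) *
            ((∫ y, S (x + y) * f (x + y) ∂(K x)) / (∫ y, S (x + y) ∂(K x)) - f x) := by
  intro x hx
  have hS_shift_pos : ∀ᵐ y ∂(K x), 0 < S (x + y) :=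
    (ae_nonneg_of_measure_Iio_zero (hK_supp x)).mono fun y hy => hS_pos _ (by linarith)
  have hKS_pos : 0 < ∫ y, S (x + y) ∂(K x) := integral_pos_of_ae_pos (hKS_int x hx) hS_shift_pos
  have hSf_cont : Continuous fun y => S (x + y) * f (x + y) :=
    (hS_diff.continuous.comp (continuous_const_add x)).mul
      (hf_diff.continuous.comp (continuous_const_add x))
  have hSf_int : Integrable (fun y => S (x + y) * f (x + y)) (K x) :=
    integrable_mul_of_integrable_mul_abs (hint x hx) hSf_cont.aestronglyMeasurable
      (hS_shift_pos.mono fun _ h => h.le)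
  simp_rw [mul_comm (f (x + _)) (S (x + _))]
  rw [deriv_fun_mul (hf_diff x) (hS_diff x), integral_sub_const_of_isProbabilityMeasure hSf_int]
  exact htransform_generator_identity (hS_pos x hx).ne' hKS_pos.ne' (hharm x hx)
end
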